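/- arXiv:2510.22843 — 5 statements merged into one kernel-verified Lean document; each statement's English description precedes it below -/
import Mathlib

section
/- The Boolean lattice consisting of all subsets of a 5-element set, ordered by inclusion (a ranked poset with rank equal to cardinality), is a Macaulay poset. -/
/-- `q` covers `p` with respect to the order relation `le`:
`p < q` and there is no element strictly between them. -/
def CoversR {α : Type*} (le : α → α → Prop) (p q : α) : Prop :=
  le p q ∧ p ≠ q ∧ ∀ r, le p r → le r q → r = p ∨ r = q

/-- The upper shadow of `A`: all elements covering some element of `A`. -/
def UpperShadowR {α : Type*} (le : α → α → Prop) (A : Set α) : Set α :=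
  {q | ∃ a ∈ A, CoversR le a q}

/-- `r` is a rank function for the order relation `le`: minimal elements have
rank `0` and ranks increase by one along covers. -/
def IsRankFunctionR {α : Type*} (le : α → α → Prop) (r : α → ℕ) : Prop :=
  (∀ p, (∀ q, le q p → q = p) → r p = 0) ∧
    ∀ p q, CoversR le p q → r q = r p + 1

/-- `S` is an initial segment (a set of largest elements) of the level `L`
with respect to the total order `t`. -/
def IsInitialSegIn {α : Type*} (t : α → α → Prop) (L S : Set α) : Prop :=
  S ⊆ L ∧ ∀ a ∈ S, ∀ b ∈ L, t a b → b ∈ S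

/-- The poset given by `le`, ranked by `r`, satisfies the Macaulay conditions with
respect to the total order `t`: for every rank `d` and every `A ⊆ P_d`, the initial
segment `S` of `P_d` of size `|A|` has `|∇S| ≤ |∇A|`, and `∇S` is again an initial
segment (of `P_{d+1}`). -/
def MacaulayWith {α : Type*} (le : α → α → Prop) (r : α → ℕ) (t : α → α → Prop) : Prop :=
  ∀ d : ℕ, ∀ A : Set α, A ⊆ {p | r p = d} →
    ∀ S : Set α, IsInitialSegIn t {p | r p = d} S → S.ncard = A.ncard →
      (UpperShadowR le S).ncard ≤ (UpperShadowR le A).ncard ∧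
        IsInitialSegIn t {p | r p = d + 1} (UpperShadowR le S)

/-- The poset given by `le` with rank function `r` (with finite rank levels) is
a Macaulay poset: some total order witnesses the Macaulay conditions. -/
def IsMacaulayPosetR {α : Type*} (le : α → α → Prop) (r : α → ℕ) : Prop :=
  IsRankFunctionR le r ∧ (∀ d : ℕ, {p | r p = d}.Finite) ∧
    ∃ t : α → α → Prop, IsLinearOrder α t ∧ MacaulayWith le r t

/-- The poset given by `le` is a Macaulay poset. -/
def IsMacaulayPoset {α : Type*} (le : α → α → Prop) : Prop :=
  ∃ r : α → ℕ, IsMacaulayPosetR le r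

/-!
Complementation turns the Boolean lattice upside down, exchanging up-shadows with shadows.
Order the `d`-sets by the colexicographic order of their complements: a segment of largest
`d`-sets is then the complement family of a colex initial segment of `(n - d)`-sets, so the
Kruskal–Katona theorem says it has the smallest up-shadow among families of its size, and its
up-shadow is again such a segment because shadows of colex initial segments are colex initial
segments.
-/

open Finset
open scoped FinsetFamily

theorem coversR_le_iff_covBy {α : Type*} [PartialOrder α] {a b : α} :
    CoversR (· ≤ ·) a b ↔ a ⋖ b := by
  refine ⟨fun ⟨hab, hne, hbetween⟩ => ⟨hab.lt_of_ne hne, fun c hac hcb => ?_⟩,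
    fun h => ⟨h.le, h.lt.ne, fun c hac hcb => ?_⟩⟩
  · rcases hbetween c hac.le hcb.le with rfl | rfl
    exacts [hac.false, hcb.false]
  · by_contra! hc
    exact h.2 (hac.lt_of_ne' hc.1) (hcb.lt_of_ne hc.2)

namespace Finset

variable {α : Type*}

theorem isRankFunctionR_card [DecidableEq α] :
    IsRankFunctionR (· ≤ · : Finset α → Finset α → Prop) card := by
  refine ⟨fun s hs => ?_, fun s t hst => ?_⟩
  · rw [← hs ∅ (empty_subset s), card_empty]
  · exact (Nat.covBy_iff_add_one_eq.1 (coversR_le_iff_covBy.1 hst).card_finset).symm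

theorem upperShadowR_coe_eq_upShadow [DecidableEq α] [Fintype α] (𝒜 : Finset (Finset α)) :
    UpperShadowR (· ≤ ·) (𝒜 : Set (Finset α)) = ∂⁺ 𝒜 := by
  ext t
  simp only [UpperShadowR, coversR_le_iff_covBy, covBy_iff_exists_insert, Set.mem_ofPred_eq,
    mem_coe, mem_upShadow_iff]

def complColex [LinearOrder α] [Fintype α] (s t : Finset α) : Prop :=
  toColex tᶜ ≤ toColex sᶜ

theorem isLinearOrder_complColex [LinearOrder α] [Fintype α] :
    IsLinearOrder (Finset α) complColex where
  refl _ := le_rfl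
  trans _ _ _ hst htu := htu.trans hst
  antisymm _ _ hst hts := compl_injective (toColex_inj.1 (hts.antisymm hst))
  total s t := le_total (toColex tᶜ : Colex (Finset α)) (toColex sᶜ)

theorem isInitialSegIn_complColex_iff [LinearOrder α] [Fintype α] {𝒮 : Finset (Finset α)}
    {d : ℕ} (h𝒮 : (𝒮 : Set (Finset α)).Sized d) :
    IsInitialSegIn complColex {s | #s = d} (𝒮 : Set (Finset α)) ↔
      Colex.IsInitSeg 𝒮ᶜˢ (Fintype.card α - d) := by
  refine ⟨fun ⟨_, hseg⟩ => ⟨h𝒮.compls, fun s t hs ⟨hts, ht⟩ => ?_⟩,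
    fun ⟨_, hseg⟩ => ⟨h𝒮, fun s hs t ht hst => ?_⟩⟩
  · rw [mem_compls] at hs ⊢
    have hd : d ≤ Fintype.card α := h𝒮 hs ▸ card_le_univ sᶜ
    refine hseg _ hs tᶜ ?_ ?_
    · rw [Set.mem_ofPred_eq, card_compl, ht]
      omega
    · simpa [complColex] using hts.le
  · rcases (show toColex tᶜ ≤ toColex sᶜ from hst).eq_or_lt with heq | hlt
    · rwa [compl_injective (toColex_inj.1 heq)]
    · have hsc : sᶜ ∈ 𝒮ᶜˢ := by rwa [mem_compls, compl_compl]
      have htc : #tᶜ = Fintype.card α - d := by rw [card_compl, ht]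
      simpa using hseg hsc ⟨hlt, htc⟩

theorem macaulayWith_complColex (n : ℕ) :
    MacaulayWith (· ≤ · : Finset (Fin n) → Finset (Fin n) → Prop) card complColex := by
  intro d A hA S hS hcard
  lift S to Finset (Finset (Fin n)) using S.toFinite
  lift A to Finset (Finset (Fin n)) using A.toFinite
  have h𝒮 : (S : Set (Finset (Fin n))).Sized d := hS.1
  have hSeg := (isInitialSegIn_complColex_iff h𝒮).1 hS
  rw [upperShadowR_coe_eq_upShadow, upperShadowR_coe_eq_upShadow, Set.ncard_coe_finset, Set.ncard_coe_finset]
  constructor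
  · rw [← card_compls (∂⁺ S), ← card_compls (∂⁺ A), ← shadow_compls, ← shadow_compls]
    refine kruskal_katona (Set.Sized.compls hA) ?_ hSeg
    simpa only [card_compls, Set.ncard_coe_finset] using hcard.le
  · rw [isInitialSegIn_complColex_iff h𝒮.upShadow, ← shadow_compls, Nat.sub_add_eq]
    exact hSeg.shadow

theorem isMacaulayPosetR_card (n : ℕ) :
    IsMacaulayPosetR (· ≤ · : Finset (Fin n) → Finset (Fin n) → Prop) card :=
  ⟨isRankFunctionR_card, fun _ => Set.toFinite _,
    complColex, isLinearOrder_complColex, macaulayWith_complColex n⟩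

end Finset

/-- The Boolean lattice of all subsets of a 5-element set, ordered by inclusion
and ranked by cardinality, is a Macaulay poset. -/
theorem booleanLattice_five_isMacaulay :
    IsMacaulayPosetR (· ≤ · : Finset (Fin 5) → Finset (Fin 5) → Prop)
      (fun s => s.card) :=
  Finset.isMacaulayPosetR_card 5
end

section
/- The disjoint union of the Boolean lattice of all subsets of a 5-element set (ordered by inclusion) with a 7-element chain — the poset on the disjoint union of the two underlying sets in which elements from different components are incomparable and each component keeps its own order — is a ranked poset (a subset has rank equal to its cardinality; the i-th chain element has rank i for 0 ≤ i ≤ 6) which is NOT Macaulay: no total order on it satisfies the Macaulay conditions. -/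
/-!
Let `n ≥ 2` be the size of the ground set. In rank `0`, the empty set is covered by `n`
singletons while the bottom of the chain is covered by one element, so condition (1) makes the
chain element the largest element of rank `0`, and condition (2) then makes the rank-`1` chain
element the largest element of rank `1`. The initial segment of size `n` in rank `1` thus consists of that chain element and
all singletons but one. Every pair contains one of these singletons, so the shadow of this
segment holds all pairs and also the rank-`2` chain element. That is one more element than the
shadow of the `n` singletons, which violates (1).
-/

theorem coversR_iff_covBy {α : Type*} [PartialOrder α] {p q : α} :
    CoversR (· ≤ ·) p q ↔ p ⋖ q := by
  rw [covBy_iff_wcovBy_and_ne, wcovBy_iff_le_and_eq_or_eq, CoversR]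
  tauto

theorem upperShadowR_eq_setOf_covBy {α : Type*} [PartialOrder α] (A : Set α) :
    UpperShadowR (· ≤ ·) A = {q | ∃ a ∈ A, a ⋖ q} := by
  simp only [UpperShadowR, coversR_iff_covBy]

theorem isRankFunctionR_iff {α : Type*} [PartialOrder α] {r : α → ℕ} :
    IsRankFunctionR (· ≤ ·) r ↔
      (∀ p, IsMin p → r p = 0) ∧ ∀ p q, p ⋖ q → r q = r p + 1 := by
  simp only [IsRankFunctionR, coversR_iff_covBy]
  refine and_congr (forall_congr' fun p => imp_congr_left ?_) Iff.rfl
  exact ⟨fun h q hq => (h q hq).ge, fun h q hq => (h hq).antisymm' hq⟩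

theorem isRankFunctionR_grade {α : Type*} [PartialOrder α] [GradeMinOrder ℕ α] :
    IsRankFunctionR (· ≤ ·) (grade ℕ : α → ℕ) :=
  isRankFunctionR_iff.2 ⟨fun _ hp => (hp.grade ℕ).eq_bot,
    fun _ _ h => (Nat.covBy_iff_add_one_eq.1 (h.grade ℕ)).symm⟩

namespace Fin

theorem covBy_iff_val_add_one_eq {m : ℕ} {i j : Fin m} : i ⋖ j ↔ (i : ℕ) + 1 = j := by
  have hconn : (Set.range (valOrderEmb m)).OrdConnected := by
    rw [show ⇑(valOrderEmb m) = val from rfl, range_val]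
    exact Set.ordConnected_Iio
  exact (hconn.apply_covBy_apply_iff _).symm.trans Nat.covBy_iff_add_one_eq

theorem isRankFunctionR_val {m : ℕ} : IsRankFunctionR (· ≤ ·) (val : Fin m → ℕ) :=
  isRankFunctionR_iff.2
    ⟨fun i hi => Nat.le_zero.1 (hi (show (⟨0, i.pos⟩ : Fin m) ≤ i from Nat.zero_le _)),
      fun _ _ h => (covBy_iff_val_add_one_eq.1 h).symm⟩

theorem upperShadowR_singleton {m : ℕ} {i j : Fin m} (h : (i : ℕ) + 1 = j) :
    UpperShadowR (· ≤ ·) {i} = {j} := by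
  ext k
  simp only [upperShadowR_eq_setOf_covBy, Set.mem_ofPred_eq, Set.mem_singleton_iff, exists_eq_left]
  rw [covBy_iff_val_add_one_eq, h, Fin.ext_iff, eq_comm]

end Fin

namespace Sum

variable {α β : Type*}

section Preorder

variable [Preorder α] [Preorder β]

@[simp] theorem inl_covBy_inl_iff {a b : α} : (inl a : α ⊕ β) ⋖ inl b ↔ a ⋖ b := by
  simp [CovBy, Sum.forall]

@[simp] theorem inr_covBy_inr_iff {a b : β} : (inr a : α ⊕ β) ⋖ inr b ↔ a ⋖ b := by
  simp [CovBy, Sum.forall]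

@[simp] theorem not_inl_covBy_inr {a : α} {b : β} : ¬ (inl a : α ⊕ β) ⋖ inr b :=
  fun h => not_inl_lt_inr h.lt

@[simp] theorem not_inr_covBy_inl {a : α} {b : β} : ¬ (inr b : α ⊕ β) ⋖ inl a :=
  fun h => not_inr_lt_inl h.lt

@[simp] theorem isMin_inl_iff {a : α} : IsMin (inl a : α ⊕ β) ↔ IsMin a := by
  simp [IsMin, Sum.forall]

@[simp] theorem isMin_inr_iff {b : β} : IsMin (inr b : α ⊕ β) ↔ IsMin b := by
  simp [IsMin, Sum.forall]

end Preorder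

variable [PartialOrder α] [PartialOrder β]

theorem isRankFunctionR_elim {r₁ : α → ℕ} {r₂ : β → ℕ} (h₁ : IsRankFunctionR (· ≤ ·) r₁)
    (h₂ : IsRankFunctionR (· ≤ ·) r₂) : IsRankFunctionR (· ≤ ·) (Sum.elim r₁ r₂) := by
  rw [isRankFunctionR_iff] at *
  refine ⟨?_, ?_⟩
  · rintro (a | b) h
    exacts [h₁.1 a (isMin_inl_iff.1 h), h₂.1 b (isMin_inr_iff.1 h)]
  · rintro (a | b) (c | d) h
    · exact h₁.2 a c (inl_covBy_inl_iff.1 h)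
    · exact absurd h not_inl_covBy_inr
    · exact absurd h not_inr_covBy_inl
    · exact h₂.2 b d (inr_covBy_inr_iff.1 h)

theorem upperShadowR_image_inl (A : Set α) :
    UpperShadowR (· ≤ ·) (inl '' A : Set (α ⊕ β)) = inl '' UpperShadowR (· ≤ ·) A := by
  ext (c | d) <;> simp [upperShadowR_eq_setOf_covBy]

theorem upperShadowR_image_inr (B : Set β) :
    UpperShadowR (· ≤ ·) (inr '' B : Set (α ⊕ β)) = inr '' UpperShadowR (· ≤ ·) B := by
  ext (c | d) <;> simp [upperShadowR_eq_setOf_covBy]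

end Sum

theorem Finset.upperShadowR_setOf_card_eq {α : Type*} (k : ℕ) :
    UpperShadowR (· ≤ ·) {s : Finset α | s.card = k} = {s | s.card = k + 1} := by
  classical
  ext u
  simp only [upperShadowR_eq_setOf_covBy, Set.mem_ofPred_eq]
  constructor
  · rintro ⟨s, rfl, hsu⟩
    exact (Nat.covBy_iff_add_one_eq.1 hsu.card_finset).symm
  · intro hu
    obtain ⟨x, hx⟩ := Finset.card_pos.1 (by omega : 0 < u.card)
    exact ⟨u.erase x, by simp [Finset.card_erase_of_mem hx, hu], Finset.erase_covBy hx⟩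

theorem Finset.covBy_of_subset_of_card_eq {α : Type*} [DecidableEq α] {s t : Finset α}
    (hst : s ⊆ t) (h : t.card = s.card + 1) : s ⋖ t :=
  Finset.covBy_iff_card_sdiff_eq_one.2 ⟨hst, by rw [Finset.card_sdiff_of_subset hst]; omega⟩

theorem Finset.ncard_setOf_card_eq_one {α : Type*} :
    {s : Finset α | s.card = 1}.ncard = Nat.card α := by
  rw [← Set.ncard_range_of_injective Finset.singleton_injective]
  congr 1
  ext s
  simp [Finset.card_eq_one, eq_comm]

section InitialSegment

variable {α : Type*} (t : α → α → Prop) [IsLinearOrder α t]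

theorem exists_isInitialSegIn {L : Set α} (hL : L.Finite) {k : ℕ} (hk : k ≤ L.ncard) :
    ∃ S, IsInitialSegIn t L S ∧ S.ncard = k := by
  induction k with
  | zero => exact ⟨∅, ⟨Set.empty_subset L, by simp⟩, Set.ncard_empty α⟩
  | succ k ih =>
    obtain ⟨S, ⟨hSL, hS⟩, rfl⟩ := ih (by omega)
    have hne : (L \ S).Nonempty :=
      Set.nonempty_of_ncard_ne_zero (by rw [Set.ncard_sdiff hSL (hL.subset hSL)]; omega)
    let _ : LinearOrder α :=
      { le := t, le_refl := refl_of t, le_trans := fun _ _ _ => trans_of t,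
        le_antisymm := fun _ _ => antisymm, le_total := total_of t,
        toDecidableLE := Classical.decRel _ }
    obtain ⟨a, ⟨haL, haS⟩, ha⟩ :=
      (L \ S).exists_max_image id (hL.subset Set.sdiff_subset) hne
    refine ⟨insert a S, ⟨Set.insert_subset haL hSL, ?_⟩,
      Set.ncard_insert_of_notMem haS (hL.subset hSL)⟩
    rintro c (rfl | hc) b hb hcb
    · by_cases hbS : b ∈ S
      · exact Or.inr hbS
      · exact Or.inl (antisymm (ha b ⟨hb, hbS⟩) hcb)
    · exact Or.inr (hS c hc b hb hcb)

variable {t}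

theorem IsInitialSegIn.subset_or_subset {L S T : Set α} (hS : IsInitialSegIn t L S)
    (hT : IsInitialSegIn t L T) : S ⊆ T ∨ T ⊆ S := by
  by_contra! h
  obtain ⟨a, haS, haT⟩ := Set.not_subset.1 h.1
  obtain ⟨b, hbT, hbS⟩ := Set.not_subset.1 h.2
  rcases total_of t a b with hab | hba
  · exact hbS (hS.2 a haS b (hT.1 hbT) hab)
  · exact haT (hT.2 b hbT a (hS.1 haS) hba)

end InitialSegment

section BooleanLatticeChain

open Sum

variable {α : Type*} {m : ℕ}

def boolChainRank (α : Type*) (m : ℕ) : Finset α ⊕ Fin m → ℕ :=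
  Sum.elim Finset.card Fin.val

@[simp] theorem boolChainRank_inl (s : Finset α) : boolChainRank α m (inl s) = s.card := rfl

@[simp] theorem boolChainRank_inr (i : Fin m) : boolChainRank α m (inr i) = i := rfl

theorem isRankFunctionR_boolChainRank : IsRankFunctionR (· ≤ ·) (boolChainRank α m) :=
  Sum.isRankFunctionR_elim isRankFunctionR_grade Fin.isRankFunctionR_val

theorem setOf_boolChainRank_eq_zero (hm : 0 < m) :
    {p | boolChainRank α m p = 0} = {inl ∅, inr ⟨0, hm⟩} := by
  ext (s | i) <;> simp [Fin.ext_iff]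

theorem setOf_boolChainRank_eq_one (hm : 1 < m) :
    {p | boolChainRank α m p = 1} = insert (inr ⟨1, hm⟩) (inl '' {s | s.card = 1}) := by
  ext (s | i) <;> simp [Fin.ext_iff]

variable [Finite α] {t : Finset α ⊕ Fin m → Finset α ⊕ Fin m → Prop} [IsLinearOrder _ t]

theorem inl_mem_upperShadowR_of_card_eq_two {S : Set (Finset α ⊕ Fin m)}
    (hS : ({p | boolChainRank α m p = 1} \ S).ncard ≤ 1) {u : Finset α} (hu : u.card = 2) :
    inl u ∈ UpperShadowR (· ≤ ·) S := by
  classical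
  obtain ⟨x, y, hxy, rfl⟩ := Finset.card_eq_two.1 hu
  obtain ⟨z, hz, hzS⟩ : ∃ z ∈ ({x, y} : Finset α), inl {z} ∈ S := by
    by_contra! h
    have hsub : ({inl {x}, inl {y}} : Set (Finset α ⊕ Fin m)) ⊆
        {p | boolChainRank α m p = 1} \ S := by
      rintro _ (rfl | rfl) <;> simp_all
    have := Set.ncard_le_ncard hsub
    rw [Set.ncard_pair (by simpa using hxy)] at this
    omega
  refine ⟨_, hzS, coversR_iff_covBy.2 (inl_covBy_inl_iff.2 ?_)⟩
  exact Finset.covBy_of_subset_of_card_eq (by simpa using hz) (by rw [hu, Finset.card_singleton])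

theorem isInitialSegIn_inr_one_of_macaulayWith (hα : 2 ≤ Nat.card α) (hm : 1 < m)
    (hM : MacaulayWith (· ≤ ·) (boolChainRank α m) t) :
    IsInitialSegIn t {p | boolChainRank α m p = 1} {inr ⟨1, hm⟩} := by
  have hm0 : 0 < m := by omega
  obtain ⟨S, hS, hS1⟩ := exists_isInitialSegIn t
    (L := {p | boolChainRank α m p = 0}) (Set.toFinite _) (k := 1)
    (by rw [setOf_boolChainRank_eq_zero hm0, Set.ncard_pair (by simp)]; omega)
  obtain ⟨a, rfl⟩ := Set.ncard_eq_one.1 hS1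
  obtain ⟨hcard, hseg⟩ := hM 0 {inr ⟨0, hm0⟩} (by simp) {a} hS (by simp)
  have hchain : UpperShadowR (· ≤ ·) {inr ⟨0, hm0⟩} =
      ({inr ⟨1, hm⟩} : Set (Finset α ⊕ Fin m)) := by
    rw [← Set.image_singleton, upperShadowR_image_inr,
      Fin.upperShadowR_singleton (j := ⟨1, hm⟩) rfl, Set.image_singleton]
  have ha := hS.1 rfl
  rw [setOf_boolChainRank_eq_zero hm0] at ha
  rcases ha with rfl | rfl
  · have hempty : ({∅} : Set (Finset α)) = {s | s.card = 0} := by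
      ext s; simp
    rw [hchain, ← Set.image_singleton, upperShadowR_image_inl, hempty,
      Finset.upperShadowR_setOf_card_eq, Set.ncard_image_of_injective _ inl_injective,
      Finset.ncard_setOf_card_eq_one, Set.ncard_singleton] at hcard
    omega
  · rwa [hchain] at hseg

theorem not_macaulayWith_boolChainRank (hα : 2 ≤ Nat.card α) (hm : 2 < m) :
    ¬ MacaulayWith (· ≤ ·) (boolChainRank α m) t := by
  classical
  intro hM
  set L := {p | boolChainRank α m p = 1} with hLdef
  have hL : L.ncard = Nat.card α + 1 := by
    rw [hLdef, setOf_boolChainRank_eq_one (by omega), Set.ncard_insert_of_notMem (by simp),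
      Set.ncard_image_of_injective _ inl_injective, Finset.ncard_setOf_card_eq_one]
  obtain ⟨S, hS, hSn⟩ := exists_isInitialSegIn t (Set.toFinite L) (k := Nat.card α) (by omega)
  have hcard := (hM 1 (inl '' {s | s.card = 1}) (by rintro _ ⟨s, hs, rfl⟩; exact hs) S hS
    (by rw [hSn, Set.ncard_image_of_injective _ inl_injective,
      Finset.ncard_setOf_card_eq_one])).1
  rw [upperShadowR_image_inl, Finset.upperShadowR_setOf_card_eq] at hcard
  have hchain : inr ⟨1, by omega⟩ ∈ S :=
    ((isInitialSegIn_inr_one_of_macaulayWith hα (by omega) hM).subset_or_subset hS).resolve_right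
      (fun h => by have := Set.ncard_le_ncard h; rw [hSn, Set.ncard_singleton] at this; omega)
      rfl
  have hrest : (L \ S).ncard = 1 := by
    rw [Set.ncard_sdiff hS.1, hL, hSn]; omega
  have hsub : insert (inr ⟨2, hm⟩) (inl '' {s | s.card = 1 + 1}) ⊆
      UpperShadowR (· ≤ ·) S := by
    rintro _ (rfl | ⟨u, hu, rfl⟩)
    · exact ⟨_, hchain,
        coversR_iff_covBy.2 (inr_covBy_inr_iff.2 (Fin.covBy_iff_val_add_one_eq.2 rfl))⟩
    · exact inl_mem_upperShadowR_of_card_eq_two hrest.le hu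
  have := Set.ncard_le_ncard hsub
  rw [Set.ncard_insert_of_notMem (by simp)] at this
  omega

end BooleanLatticeChain

/-- The disjoint union of the Boolean lattice of subsets of a 5-element set with a
7-element chain (elements in different components being incomparable) is ranked —
a subset has rank its cardinality, the `i`-th chain element has rank `i` — but it
is NOT a Macaulay poset: no total order satisfies the Macaulay conditions. -/
theorem booleanLattice_union_chain_not_macaulay :
    IsRankFunctionR (· ≤ · : Finset (Fin 5) ⊕ Fin 7 → Finset (Fin 5) ⊕ Fin 7 → Prop)
      (Sum.elim (fun s : Finset (Fin 5) => s.card) (fun i : Fin 7 => (i : ℕ))) ∧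
    (∀ d : ℕ, {p : Finset (Fin 5) ⊕ Fin 7 |
        Sum.elim (fun s : Finset (Fin 5) => s.card) (fun i : Fin 7 => (i : ℕ)) p = d}.Finite) ∧
    ¬∃ t : (Finset (Fin 5) ⊕ Fin 7) → (Finset (Fin 5) ⊕ Fin 7) → Prop,
        IsLinearOrder (Finset (Fin 5) ⊕ Fin 7) t ∧
          MacaulayWith (· ≤ ·) (Sum.elim (fun s : Finset (Fin 5) => s.card) (fun i : Fin 7 => (i : ℕ))) t := by
  refine ⟨isRankFunctionR_boolChainRank, fun _ => Set.toFinite _, ?_⟩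
  rintro ⟨t, _, hM⟩
  exact not_macaulayWith_boolChainRank (by simp) (by norm_num) hM
end

section
/- Presentation of the fiber product over K: let K be a field, I a proper homogeneous ideal of R = K[x_1,…,x_n], J a proper homogeneous ideal of S = K[y_1,…,y_m], A = R/I, B = S/J, and let π_A : A → K and π_B : B → K be the projections onto the degree-0 component. Then the fiber product A ×_K B = {(a,b) ∈ A × B : π_A(a) = π_B(b)}, a subring of the product ring A × B, is isomorphic as a K-algebra to T / (I·T + J·T + (x_i y_j : 1 ≤ i ≤ n, 1 ≤ j ≤ m)), where T = K[x_1,…,x_n,y_1,…,y_m]. -/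
open MvPolynomial

/-- `c` is a monomial of the quotient ring `R/I`: a nonzero coset of a monomial. -/
def MonClass {σ K : Type*} [Field K] (I : Ideal (MvPolynomial σ K))
    (c : MvPolynomial σ K ⧸ I) : Prop :=
  c ≠ 0 ∧ ∃ a : σ →₀ ℕ, c = Ideal.Quotient.mk I (monomial a (1 : K))

/-- The monomial poset `M_{R/I}`: the set of monomials of the quotient ring `R/I`. -/
def MonPoset {σ K : Type*} [Field K] (I : Ideal (MvPolynomial σ K)) : Type _ :=
  {c : MvPolynomial σ K ⧸ I // MonClass I c}

/-- The divisibility partial order on the monomial poset: `f ∣ g` iff `f h = g`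
for some monomial `h` of the quotient ring. -/
def monDvd {σ K : Type*} [Field K] (I : Ideal (MvPolynomial σ K))
    (f g : MonPoset I) : Prop :=
  ∃ h : MvPolynomial σ K ⧸ I, MonClass I h ∧ f.1 * h = g.1

/-- `I` is a homogeneous ideal: it contains all homogeneous components
of its elements. -/
def IsHomogIdeal {σ K : Type*} [Field K] (I : Ideal (MvPolynomial σ K)) : Prop :=
  ∀ f ∈ I, ∀ d : ℕ, homogeneousComponent d f ∈ I

/-- `I` is a monomial ideal: with any polynomial it contains all monomials
occurring in it. -/
def IsMonomialIdeal {σ K : Type*} [Field K] (I : Ideal (MvPolynomial σ K)) : Prop :=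
  ∀ f ∈ I, ∀ a ∈ f.support, monomial a (1 : K) ∈ I

/-- The coset of `1`: the least element of the monomial poset of a proper quotient. -/
noncomputable def oneMon {σ K : Type*} [Field K] (I : Ideal (MvPolynomial σ K)) (hI : I ≠ ⊤) :
    MonPoset I :=
  ⟨Ideal.Quotient.mk I 1, by
    refine ⟨?_, 0, by simp⟩
    rw [Ne, Ideal.Quotient.eq_zero_iff_mem]
    exact (Ideal.ne_top_iff_one I).mp hI⟩

open MvPolynomial

/-- The fiber product `A ×_K B` of two `K`-algebras relative to augmentations
`πA : A → K` and `πB : B → K`: the subalgebra `{(a,b) : πA a = πB b}` of `A × B`. -/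
def fiberProd {K A B : Type*} [CommRing K] [CommRing A] [CommRing B]
    [Algebra K A] [Algebra K B] (πA : A →ₐ[K] K) (πB : B →ₐ[K] K) :
    Subalgebra K (A × B) where
  carrier := {p | πA p.1 = πB p.2}
  mul_mem' := by
    intro a b ha hb
    simp only [Set.mem_setOf_eq, Prod.fst_mul, Prod.snd_mul, map_mul] at *
    rw [ha, hb]
  add_mem' := by
    intro a b ha hb
    simp only [Set.mem_setOf_eq, Prod.fst_add, Prod.snd_add, map_add] at *
    rw [ha, hb]
  algebraMap_mem' := by
    intro k
    show πA (algebraMap K A k) = πB (algebraMap K B k)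
    simp

/-! The map `T → A × B`, `p ↦ (p(x, 0), p(0, y))`, lands in the fiber product and hits every
pair `(f, g)` with `f(0) = g(0)`, namely as the image of `f + g - f(0)`. Its kernel is the
presentation ideal because every `p` is congruent to `p(x, 0) + p(0, y) - p(0, 0)` modulo the
products `x_i y_j`, and `p(0, 0) = 0` as soon as `p(x, 0) ∈ I`: a proper homogeneous ideal lies
in the augmentation ideal. Here `p(x, 0)` is `killCompl Sum.inl_injective p`. -/

open Function Set

theorem IsHomogIdeal.constantCoeff_eq_zero {σ K : Type*} [Field K]
    {I : Ideal (MvPolynomial σ K)} (hI : IsHomogIdeal I) (hI_ne_top : I ≠ ⊤)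
    {f : MvPolynomial σ K} (hf : f ∈ I) : constantCoeff f = 0 := by
  by_contra hc
  have hC : C (constantCoeff f) ∈ I := by
    simpa only [homogeneousComponent_zero, ← constantCoeff_eq] using hI f hf 0
  exact hI_ne_top (Ideal.eq_top_of_isUnit_mem _ hC ((Ne.isUnit hc).map C))

namespace MvPolynomial

variable {R : Type*} [CommRing R]

section KillCompl

variable {σ τ ρ : Type*} {f : σ → τ} (hf : Injective f)
include hf

@[simp]
theorem killCompl_X_apply (i : σ) : killCompl (R := R) hf (X (f i)) = X i := by
  rw [← rename_X, killCompl_rename_app]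

@[simp]
theorem killCompl_X_of_notMem_range {k : τ} (hk : k ∉ range f) :
    killCompl (R := R) hf (X k) = 0 := by
  simp [killCompl, hk]

theorem constantCoeff_killCompl (p : MvPolynomial τ R) :
    constantCoeff (killCompl hf p) = constantCoeff p := by
  simp only [constantCoeff_eq, coeff_killCompl, Finsupp.mapDomain_zero]

theorem killCompl_rename_of_forall_notMem_range {g : ρ → τ} (hg : ∀ i, g i ∉ range f)
    (p : MvPolynomial ρ R) : killCompl hf (rename g p) = C (constantCoeff p) := by
  have : (killCompl (R := R) hf).comp (rename g) = aeval fun _ => 0 :=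
    algHom_ext fun i => by simp [killCompl_X_of_notMem_range hf (hg i)]
  exact (DFunLike.congr_fun this p).trans (aeval_zero' p)

theorem sub_rename_killCompl_mem_span_X (p : MvPolynomial τ R) :
    p - rename f (killCompl hf p) ∈ Ideal.span (X '' (range f)ᶜ) := by
  induction p using MvPolynomial.induction_on with
  | C c => simp
  | add p q hp hq => simpa only [map_add, add_sub_add_comm] using add_mem hp hq
  | mul_X p k hp =>
    by_cases hk : k ∈ range f
    · obtain ⟨i, rfl⟩ := hk
      rw [map_mul, map_mul, killCompl_X_apply, rename_X, ← sub_mul]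
      exact Ideal.mul_mem_right _ _ hp
    · rw [map_mul, killCompl_X_of_notMem_range hf hk, mul_zero, map_zero, sub_zero]
      exact Ideal.mul_mem_left _ _ (Ideal.subset_span ⟨k, hk, rfl⟩)

end KillCompl

variable {σ₁ σ₂ : Type*}

variable (σ₁ σ₂ R) in
noncomputable def mixedIdeal : Ideal (MvPolynomial (σ₁ ⊕ σ₂) R) :=
  Ideal.span {p | ∃ i j, p = X (Sum.inl i) * X (Sum.inr j)}

theorem span_X_inr_mul_span_X_inl_le_mixedIdeal :
    Ideal.span (X '' range Sum.inr) * Ideal.span (X '' range Sum.inl) ≤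
      mixedIdeal R σ₁ σ₂ := by
  rw [Ideal.span_mul_span', Ideal.span_le]
  rintro _ ⟨_, ⟨_, ⟨j, rfl⟩, rfl⟩, _, ⟨_, ⟨i, rfl⟩, rfl⟩, rfl⟩
  exact Ideal.subset_span ⟨i, j, mul_comm _ _⟩

theorem sub_rename_killCompl_sub_rename_killCompl_add_C_mem_mixedIdeal
    (p : MvPolynomial (σ₁ ⊕ σ₂) R) :
    p - rename Sum.inl (killCompl Sum.inl_injective p)
      - rename Sum.inr (killCompl Sum.inr_injective p) + C (constantCoeff p)
      ∈ mixedIdeal R σ₁ σ₂ := by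
  induction p using MvPolynomial.induction_on with
  | C c => simp
  | add p q hp hq =>
    convert add_mem hp hq using 1
    simp only [map_add]
    ring
  | mul_X p k _ =>
    rcases k with i | j
    · have hp := sub_rename_killCompl_mem_span_X (R := R) Sum.inl_injective p
      rw [compl_range_inl] at hp
      convert span_X_inr_mul_span_X_inl_le_mixedIdeal
        (Ideal.mul_mem_mul hp (Ideal.subset_span ⟨_, ⟨i, rfl⟩, rfl⟩)) using 1
      simp only [map_mul, killCompl_X_apply, rename_X, mem_range, reduceCtorEq, exists_false,
        not_false_eq_true, killCompl_X_of_notMem_range, mul_zero, rename_zero, sub_zero,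
        constantCoeff_X, C_0, add_zero]
      ring
    · have hp := sub_rename_killCompl_mem_span_X (R := R) Sum.inr_injective p
      rw [compl_range_inr] at hp
      convert span_X_inr_mul_span_X_inl_le_mixedIdeal
        (Ideal.mul_mem_mul (Ideal.subset_span ⟨_, ⟨j, rfl⟩, rfl⟩) hp) using 1
      simp only [map_mul, killCompl_X_apply, rename_X, mem_range, reduceCtorEq, exists_false,
        not_false_eq_true, killCompl_X_of_notMem_range, mul_zero, rename_zero, sub_zero,
        constantCoeff_X, C_0, add_zero]
      ring

end MvPolynomial

namespace FiberProd

open MvPolynomial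

variable {R : Type*} [CommRing R] {σ₁ σ₂ : Type*}
  (I : Ideal (MvPolynomial σ₁ R)) (J : Ideal (MvPolynomial σ₂ R))

noncomputable def presentationIdeal : Ideal (MvPolynomial (σ₁ ⊕ σ₂) R) :=
  Ideal.map (rename Sum.inl).toRingHom I ⊔ Ideal.map (rename Sum.inr).toRingHom J ⊔
    mixedIdeal R σ₁ σ₂

noncomputable def toProdQuotient :
    MvPolynomial (σ₁ ⊕ σ₂) R →ₐ[R] (MvPolynomial σ₁ R ⧸ I) × (MvPolynomial σ₂ R ⧸ J) :=
  ((Ideal.Quotient.mkₐ R I).comp (killCompl Sum.inl_injective)).prod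
    ((Ideal.Quotient.mkₐ R J).comp (killCompl Sum.inr_injective))

theorem toProdQuotient_apply (p : MvPolynomial (σ₁ ⊕ σ₂) R) :
    toProdQuotient I J p = (Ideal.Quotient.mk I (killCompl Sum.inl_injective p),
      Ideal.Quotient.mk J (killCompl Sum.inr_injective p)) :=
  rfl

theorem toProdQuotient_rename_inl (f : MvPolynomial σ₁ R) :
    toProdQuotient I J (rename Sum.inl f) =
      (Ideal.Quotient.mk I f, Ideal.Quotient.mk J (C (constantCoeff f))) := by
  rw [toProdQuotient_apply, killCompl_rename_app,
    killCompl_rename_of_forall_notMem_range _ (by simp)]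

theorem toProdQuotient_rename_inr (g : MvPolynomial σ₂ R) :
    toProdQuotient I J (rename Sum.inr g) =
      (Ideal.Quotient.mk I (C (constantCoeff g)), Ideal.Quotient.mk J g) := by
  rw [toProdQuotient_apply, killCompl_rename_app,
    killCompl_rename_of_forall_notMem_range _ (by simp)]

theorem ker_toProdQuotient (hI : ∀ f ∈ I, constantCoeff f = 0)
    (hJ : ∀ g ∈ J, constantCoeff g = 0) :
    RingHom.ker (toProdQuotient I J) = presentationIdeal I J := by
  apply le_antisymm
  · intro p hp
    obtain ⟨hpI, hpJ⟩ :
        killCompl Sum.inl_injective p ∈ I ∧ killCompl Sum.inr_injective p ∈ J := by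
      simpa [RingHom.mem_ker, toProdQuotient_apply, Ideal.Quotient.eq_zero_iff_mem] using hp
    have hp0 : constantCoeff p = 0 := constantCoeff_killCompl Sum.inl_injective p ▸ hI _ hpI
    have hmixed := sub_rename_killCompl_sub_rename_killCompl_add_C_mem_mixedIdeal p
    rw [hp0, C_0, add_zero] at hmixed
    have hxPart : rename Sum.inl (killCompl Sum.inl_injective p) ∈ presentationIdeal I J :=
      Ideal.mem_sup_left (Ideal.mem_sup_left (Ideal.mem_map_of_mem _ hpI))
    have hyPart : rename Sum.inr (killCompl Sum.inr_injective p) ∈ presentationIdeal I J :=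
      Ideal.mem_sup_left (Ideal.mem_sup_right (Ideal.mem_map_of_mem _ hpJ))
    have hmixed' : _ ∈ presentationIdeal I J := Ideal.mem_sup_right hmixed
    convert add_mem (add_mem hmixed' hxPart) hyPart using 1
    abel
  · refine sup_le (sup_le ?_ ?_) ?_
    · rw [Ideal.map_le_iff_le_comap]
      intro f hf
      simp [RingHom.mem_ker, toProdQuotient_rename_inl, hI f hf,
        Ideal.Quotient.eq_zero_iff_mem.mpr hf]
    · rw [Ideal.map_le_iff_le_comap]
      intro g hg
      simp [RingHom.mem_ker, toProdQuotient_rename_inr, hJ g hg,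
        Ideal.Quotient.eq_zero_iff_mem.mpr hg]
    · rw [mixedIdeal, Ideal.span_le]
      rintro _ ⟨i, j, rfl⟩
      rw [SetLike.mem_coe, RingHom.mem_ker, ← rename_X Sum.inl i, ← rename_X Sum.inr j, map_mul,
        toProdQuotient_rename_inl, toProdQuotient_rename_inr]
      simp

theorem range_toProdQuotient {πA : (MvPolynomial σ₁ R ⧸ I) →ₐ[R] R}
    {πB : (MvPolynomial σ₂ R ⧸ J) →ₐ[R] R}
    (hπA : ∀ f, πA (Ideal.Quotient.mk I f) = constantCoeff f)
    (hπB : ∀ g, πB (Ideal.Quotient.mk J g) = constantCoeff g) :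
    (toProdQuotient I J).range = fiberProd πA πB := by
  apply le_antisymm
  · rintro _ ⟨p, rfl⟩
    change πA _ = πB _
    simp [toProdQuotient_apply, hπA, hπB, constantCoeff_killCompl]
  · rintro ⟨a, b⟩ hab
    obtain ⟨f, rfl⟩ := Ideal.Quotient.mk_surjective a
    obtain ⟨g, rfl⟩ := Ideal.Quotient.mk_surjective b
    have hfg : constantCoeff f = constantCoeff g := by
      rw [← hπA, ← hπB]
      exact hab
    refine ⟨rename Sum.inl f + rename Sum.inr g - C (constantCoeff g), ?_⟩
    simp [toProdQuotient_rename_inl, toProdQuotient_rename_inr, hfg,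
      ← Ideal.Quotient.mk_algebraMap]

noncomputable def equivQuotientPresentationIdeal {πA : (MvPolynomial σ₁ R ⧸ I) →ₐ[R] R}
    {πB : (MvPolynomial σ₂ R ⧸ J) →ₐ[R] R}
    (hπA : ∀ f, πA (Ideal.Quotient.mk I f) = constantCoeff f)
    (hπB : ∀ g, πB (Ideal.Quotient.mk J g) = constantCoeff g)
    (hI : ∀ f ∈ I, constantCoeff f = 0) (hJ : ∀ g ∈ J, constantCoeff g = 0) :
    fiberProd πA πB ≃ₐ[R] MvPolynomial (σ₁ ⊕ σ₂) R ⧸ presentationIdeal I J :=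
  (Subalgebra.equivOfEq _ _ (range_toProdQuotient I J hπA hπB)).symm.trans <|
    (Ideal.quotientKerEquivRange (toProdQuotient I J)).symm.trans <|
      Ideal.quotientEquivAlgOfEq R (ker_toProdQuotient I J hI hJ)

end FiberProd

/-- **Presentation of the fiber product over `K`.** Let `I ⊂ K[x_1,…,x_n]` and
`J ⊂ K[y_1,…,y_m]` be proper homogeneous ideals, `A = K[x]/I`, `B = K[y]/J`, with
augmentations `πA, πB` (projection to the degree-zero component, i.e. the constant
coefficient of a representative). Then the fiber product `A ×_K B` is isomorphic as
a `K`-algebra to `T/(I·T + J·T + (x_i y_j))`, where `T = K[x_1,…,x_n,y_1,…,y_m]`. -/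
theorem fiberProduct_presentation {K : Type*} [Field K] (n m : ℕ)
    (I : Ideal (MvPolynomial (Fin n) K)) (J : Ideal (MvPolynomial (Fin m) K))
    (hIproper : I ≠ ⊤) (hJproper : J ≠ ⊤)
    (hIhom : IsHomogIdeal I) (hJhom : IsHomogIdeal J)
    (πA : (MvPolynomial (Fin n) K ⧸ I) →ₐ[K] K)
    (πB : (MvPolynomial (Fin m) K ⧸ J) →ₐ[K] K)
    (hπA : ∀ f : MvPolynomial (Fin n) K,
      πA (Ideal.Quotient.mk I f) = constantCoeff f)
    (hπB : ∀ g : MvPolynomial (Fin m) K,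
      πB (Ideal.Quotient.mk J g) = constantCoeff g) :
    Nonempty ((fiberProd πA πB) ≃ₐ[K]
      (MvPolynomial (Fin n ⊕ Fin m) K ⧸
        (Ideal.map (rename (Sum.inl : Fin n → Fin n ⊕ Fin m)).toRingHom I ⊔
         Ideal.map (rename (Sum.inr : Fin m → Fin n ⊕ Fin m)).toRingHom J ⊔
         Ideal.span {p : MvPolynomial (Fin n ⊕ Fin m) K |
            ∃ i j, p = X (Sum.inl i) * X (Sum.inr j)}))) :=
  ⟨FiberProd.equivQuotientPresentationIdeal I J hπA hπB
    (fun _ => hIhom.constantCoeff_eq_zero hIproper)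
    (fun _ => hJhom.constantCoeff_eq_zero hJproper)⟩
end

section
/- Let K be a field, I ⊂ R = K[x_1,…,x_n] and J ⊂ S = K[y_1,…,y_m] proper monomial ideals such that A = R/I and B = S/J are Artinian and each monomial poset M_A, M_B has a unique maximal element, say m_A = f + I and m_B = g + J with f, g monomials of the same total degree. Then the monomial poset of the connected sum A #_K B, i.e. of the ring T / (I·T + J·T + (x_i y_j : 1 ≤ i ≤ n, 1 ≤ j ≤ m) + (f − g)) with T = K[x_1,…,x_n,y_1,…,y_m], is isomorphic as a poset to the closed product M_A ◇ M_B. -/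
/-!
Write `F = x^af`, `G = y^ag` and `M = I·T + J·T + (x_i y_j)`, a monomial ideal, so that the
connected-sum ideal is `Q = M + (F - G)`. Maximality of `f + I` and `g + J` means `F x_i ∈ I·T`
and `G y_j ∈ J·T`, while `F y_j` and `G x_i` are mixed; so `F - G` times any non-constant monomial
lies in `M` (if `f = 1` then `g = 1` and `F - G = 0`), and every element of `Q` is
`m + c (F - G)` with `m ∈ M`, `c ∈ K`. Hence on the monomials outside `M` (the nonzero monomials
of `A` and of `B`) an element of `Q` is supported on `{F, G}` with opposite coefficients. It
follows that `K[x] ∩ Q = I`, `K[y] ∩ Q = J`, that the monomials of `A` and of `B` meet in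
`A # B` only in `1 = 1` and `f = g`, and that every multiple of a non-constant monomial of `A`
is a monomial of `A`: this is the closed product.
-/

open MvPolynomial

/-- The setoid on `α ⊕ β` generated by identifying the least elements `ℓA, ℓB`
with each other and the greatest elements `LA, LB` with each other. -/
def closedSetoid {α β : Type*} (ℓA LA : α) (ℓB LB : β) : Setoid (α ⊕ β) :=
  Relation.EqvGen.setoid fun x y =>
    (x = Sum.inl ℓA ∧ y = Sum.inr ℓB) ∨ (x = Sum.inl LA ∧ y = Sum.inr LB)

/-- The closed product of two posets with least elements `ℓA, ℓB` and greatest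
elements `LA, LB`: the disjoint union with the least elements identified and the
greatest elements identified. -/
def ClosedProd {α β : Type*} (ℓA LA : α) (ℓB LB : β) : Type _ :=
  Quotient (closedSetoid ℓA LA ℓB LB)

/-- The order on the closed product: `x ≤ y` iff they admit representatives in the
same component which are comparable there. -/
def closedLE {α β : Type*} (rA : α → α → Prop) (rB : β → β → Prop)
    (ℓA LA : α) (ℓB LB : β) (x y : ClosedProd ℓA LA ℓB LB) : Prop :=
  ∃ u v : α ⊕ β, x = Quotient.mk (closedSetoid ℓA LA ℓB LB) u ∧
    y = Quotient.mk (closedSetoid ℓA LA ℓB LB) v ∧ Sum.LiftRel rA rB u v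

namespace ClosedProd

variable {α β γ : Type*} {ℓA LA : α} {ℓB LB : β}

theorem mk_inl_bot : (Quotient.mk (closedSetoid ℓA LA ℓB LB) (Sum.inl ℓA)) =
    Quotient.mk _ (Sum.inr ℓB) :=
  Quot.sound (.rel _ _ (.inl ⟨rfl, rfl⟩))

theorem mk_inl_top : (Quotient.mk (closedSetoid ℓA LA ℓB LB) (Sum.inl LA)) =
    Quotient.mk _ (Sum.inr LB) :=
  Quot.sound (.rel _ _ (.inr ⟨rfl, rfl⟩))

def lift (f : α → γ) (g : β → γ) (hℓ : f ℓA = g ℓB) (hL : f LA = g LB) :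
    ClosedProd ℓA LA ℓB LB → γ :=
  Quotient.lift (Sum.elim f g) fun u v huv => by
    induction huv with
    | rel u v h => rcases h with ⟨rfl, rfl⟩ | ⟨rfl, rfl⟩ <;> assumption
    | refl => rfl
    | symm _ _ _ ih => exact ih.symm
    | trans _ _ _ _ _ ih₁ ih₂ => exact ih₁.trans ih₂

variable {f : α → γ} {g : β → γ} {hℓ : f ℓA = g ℓB} {hL : f LA = g LB}

theorem lift_injective (hf : f.Injective) (hg : g.Injective)
    (hfg : ∀ a b, f a = g b → a = ℓA ∧ b = ℓB ∨ a = LA ∧ b = LB) :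
    (lift f g hℓ hL).Injective := by
  have glue : ∀ a b, f a = g b →
      Quotient.mk (closedSetoid ℓA LA ℓB LB) (.inl a) = Quotient.mk _ (.inr b) := by
    intro a b h
    rcases hfg a b h with ⟨rfl, rfl⟩ | ⟨rfl, rfl⟩
    exacts [mk_inl_bot, mk_inl_top]
  rintro ⟨a | b⟩ ⟨a' | b'⟩ h
  · exact congrArg _ (congrArg Sum.inl (hf h))
  · exact glue a b' h
  · exact (glue a' b h.symm).symm
  · exact congrArg _ (congrArg Sum.inr (hg h))

theorem lift_surjective (hfg : ∀ z, (∃ a, f a = z) ∨ ∃ b, g b = z) :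
    (lift f g hℓ hL).Surjective := by
  intro z
  rcases hfg z with ⟨a, rfl⟩ | ⟨b, rfl⟩
  exacts [⟨Quotient.mk _ (.inl a), rfl⟩, ⟨Quotient.mk _ (.inr b), rfl⟩]

variable {rA : α → α → Prop} {rB : β → β → Prop}

theorem closedLE_bot (hA : ∀ a, rA ℓA a) (hB : ∀ b, rB ℓB b) (y : ClosedProd ℓA LA ℓB LB) :
    closedLE rA rB ℓA LA ℓB LB (Quotient.mk _ (.inl ℓA)) y := by
  obtain ⟨a | b⟩ := y
  · exact ⟨.inl ℓA, .inl a, rfl, rfl, .inl (hA a)⟩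
  · exact ⟨.inr ℓB, .inr b, mk_inl_bot, rfl, .inr (hB b)⟩

theorem closedLE_iff_lift (R : γ → γ → Prop) (hinj : (lift f g hℓ hL).Injective)
    (hA : ∀ a, rA ℓA a) (hB : ∀ b, rB ℓB b)
    (hRf : ∀ a a', rA a a' → R (f a) (f a')) (hRg : ∀ b b', rB b b' → R (g b) (g b'))
    (hfR : ∀ a z, R (f a) z → a = ℓA ∨ ∃ a', f a' = z ∧ rA a a')
    (hgR : ∀ b z, R (g b) z → b = ℓB ∨ ∃ b', g b' = z ∧ rB b b')
    (x y : ClosedProd ℓA LA ℓB LB) :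
    closedLE rA rB ℓA LA ℓB LB x y ↔ R (lift f g hℓ hL x) (lift f g hℓ hL y) := by
  constructor
  · rintro ⟨u, v, rfl, rfl, huv⟩
    cases huv with
    | inl h => exact hRf _ _ h
    | inr h => exact hRg _ _ h
  · obtain ⟨a | b⟩ := x <;> intro h
    · rcases hfR a _ h with rfl | ⟨a', ha', haa'⟩
      · exact closedLE_bot hA hB y
      · exact ⟨.inl a, .inl a', rfl, hinj ha'.symm, .inl haa'⟩
    · rcases hgR b _ h with rfl | ⟨b', hb', hbb'⟩
      · have hbot := closedLE_bot (LA := LA) (LB := LB) hA hB y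
        rw [mk_inl_bot] at hbot
        exact hbot
      · exact ⟨.inr b, .inr b', rfl, hinj hb'.symm, .inr hbb'⟩

end ClosedProd

open Finsupp (mapDomain)

section MonomialQuotient

variable {K σ ρ : Type*} [Field K] {I : Ideal (MvPolynomial σ K)}

theorem monomial_mem_of_le {s t : σ →₀ ℕ} (hst : s ≤ t) (hs : monomial s (1 : K) ∈ I) :
    monomial t (1 : K) ∈ I := by
  rw [← add_tsub_cancel_of_le hst, ← one_mul (1 : K), ← monomial_mul]
  exact I.mul_mem_right _ hs

theorem monClass_mk_monomial {s : σ →₀ ℕ} (hs : monomial s (1 : K) ∉ I) :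
    MonClass I (Ideal.Quotient.mk I (monomial s 1)) :=
  ⟨by rwa [Ne, Ideal.Quotient.eq_zero_iff_mem], s, rfl⟩

theorem MonPoset.monomial_notMem (c : MonPoset I) {s : σ →₀ ℕ}
    (hc : c.1 = Ideal.Quotient.mk I (monomial s 1)) : monomial s (1 : K) ∉ I := by
  rw [← Ideal.Quotient.eq_zero_iff_mem, ← hc]
  exact c.2.1

theorem monDvd_of_le {c c' : MonPoset I} {s t : σ →₀ ℕ}
    (hc : c.1 = Ideal.Quotient.mk I (monomial s 1))
    (hc' : c'.1 = Ideal.Quotient.mk I (monomial t 1)) (hst : s ≤ t) : monDvd I c c' :=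
  ⟨_, monClass_mk_monomial fun h => c'.monomial_notMem hc' (monomial_mem_of_le tsub_le_self h),
    by rw [hc, hc', ← map_mul, monomial_mul, one_mul, add_tsub_cancel_of_le hst]⟩

theorem oneMon_monDvd (hI : I ≠ ⊤) (c : MonPoset I) : monDvd I (oneMon I hI) c :=
  ⟨c.1, c.2, by rw [show (oneMon I hI).1 = 1 from map_one _, one_mul]⟩

structure IsSocleMonomial (I : Ideal (MvPolynomial σ K)) (a : σ →₀ ℕ) : Prop where
  notMem : monomial a (1 : K) ∉ I
  add_single_mem : ∀ i, monomial (a + Finsupp.single i 1) (1 : K) ∈ I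

theorem IsMonomialIdeal.isSocleMonomial (hI : IsMonomialIdeal I) {m : MonPoset I}
    {a : σ →₀ ℕ} (hm : m.1 = Ideal.Quotient.mk I (monomial a 1))
    (hmax : ∀ c, monDvd I m c → c = m) : IsSocleMonomial I a where
  notMem := m.monomial_notMem hm
  add_single_mem i := by
    classical
    by_contra hi
    have hcm := hmax ⟨_, monClass_mk_monomial hi⟩ (monDvd_of_le hm rfl le_self_add)
    have hdiff : monomial (a + Finsupp.single i 1) (1 : K) - monomial a 1 ∈ I :=
      Ideal.Quotient.eq.mp (by rw [← hm, ← hcm])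
    refine hi (hI _ hdiff _ ?_)
    rw [mem_support_iff, coeff_sub, coeff_monomial, coeff_monomial, if_pos rfl,
      if_neg (by simp)]
    exact sub_ne_zero.mpr one_ne_zero

theorem IsMonomialIdeal.eq_span (hI : IsMonomialIdeal I) :
    I = Ideal.span ((monomial · (1 : K)) '' {s | monomial s 1 ∈ I}) := by
  refine le_antisymm (fun p hp => ?_) (Ideal.span_le.mpr ?_)
  · rw [p.as_sum]
    refine Ideal.sum_mem _ fun s hs => ?_
    rw [← mul_one (coeff s p), ← C_mul_monomial]
    exact Ideal.mul_mem_left _ _ (Ideal.subset_span ⟨s, hI p hp s hs, rfl⟩)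
  · rintro _ ⟨s, hs, rfl⟩
    exact hs

theorem IsMonomialIdeal.map_rename_eq_span (hI : IsMonomialIdeal I) (f : σ → ρ) :
    I.map (rename f).toRingHom =
      Ideal.span ((monomial · (1 : K)) '' (mapDomain f '' {s | monomial s 1 ∈ I})) := by
  conv_lhs => rw [hI.eq_span]
  rw [Ideal.map_span, Set.image_image, Set.image_image]
  simp [rename_monomial]

variable (f : σ → ρ) {Q : Ideal (MvPolynomial ρ K)} (hQ : Q.comap (rename f) = I)

noncomputable def MonPoset.map (c : MonPoset I) : MonPoset Q :=
  ⟨Ideal.quotientMap Q (rename (R := K) f).toRingHom hQ.ge c.1, by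
    obtain ⟨hc, s, hs⟩ := c.2
    refine ⟨?_, mapDomain f s, by simp [hs, Ideal.quotientMap_mk, rename_monomial]⟩
    exact fun h => hc ((map_eq_zero_iff _ (Ideal.quotientMap_injective' hQ.le)).mp h)⟩

variable {f hQ}

theorem MonPoset.map_val {c : MonPoset I} {s : σ →₀ ℕ}
    (hc : c.1 = Ideal.Quotient.mk I (monomial s 1)) :
    (c.map f hQ).1 = Ideal.Quotient.mk Q (monomial (mapDomain f s) 1) := by
  simp [MonPoset.map, hc, Ideal.quotientMap_mk, rename_monomial]

theorem MonPoset.map_oneMon_val (hI : I ≠ ⊤) : ((oneMon I hI).map f hQ).1 = 1 :=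
  map_one _

theorem MonPoset.map_injective : (MonPoset.map f hQ).Injective := fun _ _ h =>
  Subtype.ext (Ideal.quotientMap_injective' hQ.le (congrArg Subtype.val h))

theorem monDvd_map {c c' : MonPoset I} (h : monDvd I c c') :
    monDvd Q (c.map f hQ) (c'.map f hQ) := by
  obtain ⟨w, hw, hmul⟩ := h
  exact ⟨_, (MonPoset.map f hQ ⟨w, hw⟩).2, by simp only [MonPoset.map, ← map_mul, hmul]⟩

theorem MonPoset.eq_oneMon_or_exists_of_monDvd_map (hI : I ≠ ⊤)
    (hshape : ∀ s ≠ 0, ∀ e,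
      monomial (mapDomain f s + e) (1 : K) ∉ Q → ∃ s', e = mapDomain f s')
    {c : MonPoset I} {z : MonPoset Q} (h : monDvd Q (c.map f hQ) z) :
    c = oneMon I hI ∨ ∃ c', c'.map f hQ = z ∧ monDvd I c c' := by
  obtain ⟨s, hs⟩ := c.2.2
  obtain ⟨w, ⟨-, e, rfl⟩, hmul⟩ := h
  rcases eq_or_ne s 0 with rfl | hs0
  · exact .inl (Subtype.ext (by rw [hs, monomial_zero', C_1]; rfl))
  have hz : z.1 = Ideal.Quotient.mk Q (monomial (mapDomain f s + e) 1) := by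
    rw [← hmul, map_val hs, ← map_mul, monomial_mul, one_mul]
  obtain ⟨s', rfl⟩ := hshape s hs0 e fun hmem =>
    z.2.1 (by rw [hz, Ideal.Quotient.eq_zero_iff_mem]; exact hmem)
  rw [← Finsupp.mapDomain_add] at hz
  have hss' : monomial (s + s') (1 : K) ∉ I := by
    rw [← hQ, Ideal.mem_comap, rename_monomial, ← Ideal.Quotient.eq_zero_iff_mem, ← hz]
    exact z.2.1
  exact .inr ⟨(⟨_, monClass_mk_monomial hss'⟩ : MonPoset I),
    Subtype.ext ((map_val rfl).trans hz.symm), monDvd_of_le hs rfl le_self_add⟩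

end MonomialQuotient

namespace ConnectedSum

variable {K σ τ : Type*} [Field K] {I : Ideal (MvPolynomial σ K)}
  {J : Ideal (MvPolynomial τ K)} {af : σ →₀ ℕ} {ag : τ →₀ ℕ}

@[simp] theorem mapDomain_inl_apply_inl (s : σ →₀ ℕ) (i : σ) :
    mapDomain (Sum.inl : σ → σ ⊕ τ) s (.inl i) = s i :=
  Finsupp.mapDomain_apply Sum.inl_injective s i

@[simp] theorem mapDomain_inl_apply_inr (s : σ →₀ ℕ) (j : τ) :
    mapDomain (Sum.inl : σ → σ ⊕ τ) s (.inr j) = 0 :=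
  Finsupp.mapDomain_of_notMem_range s _ (by simp)

@[simp] theorem mapDomain_inr_apply_inr (t : τ →₀ ℕ) (j : τ) :
    mapDomain (Sum.inr : τ → σ ⊕ τ) t (.inr j) = t j :=
  Finsupp.mapDomain_apply Sum.inr_injective t j

@[simp] theorem mapDomain_inr_apply_inl (t : τ →₀ ℕ) (i : σ) :
    mapDomain (Sum.inr : τ → σ ⊕ τ) t (.inl i) = 0 :=
  Finsupp.mapDomain_of_notMem_range t _ (by simp)

theorem mapDomain_inl_eq_mapDomain_inr_iff {s : σ →₀ ℕ} {t : τ →₀ ℕ} :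
    mapDomain Sum.inl s = mapDomain Sum.inr t ↔ s = 0 ∧ t = 0 := by
  refine ⟨fun h => ⟨?_, ?_⟩, fun ⟨hs, ht⟩ => by simp [hs, ht]⟩ <;> ext x
  · simpa using DFunLike.congr_fun h (.inl x)
  · simpa using (DFunLike.congr_fun h (.inr x)).symm

variable (I J af ag)

noncomputable def monomialPart : Ideal (MvPolynomial (σ ⊕ τ) K) :=
  Ideal.map (rename (Sum.inl : σ → σ ⊕ τ)).toRingHom I ⊔
    Ideal.map (rename (Sum.inr : τ → σ ⊕ τ)).toRingHom J ⊔
    Ideal.span {p | ∃ i j, p = X (Sum.inl i) * X (Sum.inr j)}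

noncomputable def socleDiff : MvPolynomial (σ ⊕ τ) K :=
  rename Sum.inl (monomial af (1 : K)) - rename Sum.inr (monomial ag (1 : K))

noncomputable def connectedSumIdeal : Ideal (MvPolynomial (σ ⊕ τ) K) :=
  monomialPart I J ⊔ Ideal.span {socleDiff af ag}

def monomialPartExps : Set ((σ ⊕ τ) →₀ ℕ) :=
  mapDomain Sum.inl '' {s | monomial s (1 : K) ∈ I} ∪
    mapDomain Sum.inr '' {t | monomial t (1 : K) ∈ J} ∪
    Set.range fun ij : σ × τ =>
      Finsupp.single (Sum.inl ij.1) 1 + Finsupp.single (Sum.inr ij.2) 1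

structure IsConnectedSumData : Prop where
  isMonomial_left : IsMonomialIdeal I
  isMonomial_right : IsMonomialIdeal J
  ne_top_left : I ≠ ⊤
  ne_top_right : J ≠ ⊤
  socle_left : IsSocleMonomial I af
  socle_right : IsSocleMonomial J ag
  eq_zero_iff : af = 0 ↔ ag = 0

variable {I J af ag}

theorem monomialPart_eq_span (hI : IsMonomialIdeal I) (hJ : IsMonomialIdeal J) :
    monomialPart I J = Ideal.span ((monomial · (1 : K)) '' monomialPartExps I J) := by
  rw [monomialPart, hI.map_rename_eq_span, hJ.map_rename_eq_span, monomialPartExps,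
    Set.image_union, Set.image_union, Ideal.span_union, Ideal.span_union]
  congr
  ext p
  simp [X, monomial_mul, eq_comm]

theorem mem_monomialPart_iff (hI : IsMonomialIdeal I) (hJ : IsMonomialIdeal J)
    {p : MvPolynomial (σ ⊕ τ) K} :
    p ∈ monomialPart I J ↔ ∀ a ∈ p.support, a ∈ upperClosure (monomialPartExps I J) := by
  rw [monomialPart_eq_span hI hJ, mem_ideal_span_monomial_image]
  rfl

theorem mapDomain_inl_mem_upperClosure_iff (hJ : J ≠ ⊤) {s : σ →₀ ℕ} :
    mapDomain Sum.inl s ∈ upperClosure (monomialPartExps I J) ↔ monomial s (1 : K) ∈ I := by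
  refine ⟨?_, fun hs => ⟨_, .inl (.inl ⟨s, hs, rfl⟩), le_rfl⟩⟩
  rintro ⟨b, (⟨s', hs', rfl⟩ | ⟨t, ht, rfl⟩) | ⟨⟨i, j⟩, rfl⟩, hb⟩
  · exact monomial_mem_of_le (fun i => by simpa using hb (.inl i)) hs'
  · obtain rfl : t = 0 := by ext j; simpa using hb (.inr j)
    exact absurd ((Ideal.eq_top_iff_one J).mpr (by simpa using ht)) hJ
  · simpa using hb (.inr j)

theorem mapDomain_inr_mem_upperClosure_iff (hI : I ≠ ⊤) {t : τ →₀ ℕ} :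
    mapDomain Sum.inr t ∈ upperClosure (monomialPartExps I J) ↔ monomial t (1 : K) ∈ J := by
  refine ⟨?_, fun ht => ⟨_, .inl (.inr ⟨t, ht, rfl⟩), le_rfl⟩⟩
  rintro ⟨b, (⟨s, hs, rfl⟩ | ⟨t', ht', rfl⟩) | ⟨⟨i, j⟩, rfl⟩, hb⟩
  · obtain rfl : s = 0 := by ext i; simpa using hb (.inl i)
    exact absurd ((Ideal.eq_top_iff_one I).mpr (by simpa using hs)) hI
  · exact monomial_mem_of_le (fun j => by simpa using hb (.inr j)) ht'
  · simpa using hb (.inl i)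

theorem forall_inr_eq_zero_or_forall_inl_eq_zero {a : (σ ⊕ τ) →₀ ℕ}
    (ha : a ∉ upperClosure (monomialPartExps I J)) :
    (∀ j, a (.inr j) = 0) ∨ ∀ i, a (.inl i) = 0 := by
  by_contra! ⟨⟨j, hj⟩, ⟨i, hi⟩⟩
  refine ha ⟨_, .inr ⟨(i, j), rfl⟩, fun z => ?_⟩
  classical
  rcases z with i' | j' <;> simp [Finsupp.single_apply] <;> split_ifs <;> subst_vars <;> omega

theorem exists_eq_mapDomain_of_notMem_upperClosure {a : (σ ⊕ τ) →₀ ℕ}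
    (ha : a ∉ upperClosure (monomialPartExps I J)) :
    (∃ s, monomial s (1 : K) ∉ I ∧ mapDomain Sum.inl s = a) ∨
      ∃ t, monomial t (1 : K) ∉ J ∧ mapDomain Sum.inr t = a := by
  rcases forall_inr_eq_zero_or_forall_inl_eq_zero ha with h | h
  · obtain ⟨s, rfl⟩ := (Finsupp.mem_range_mapDomain_iff _ Sum.inl_injective a).mpr <| by
      rintro (i | j) hb
      exacts [absurd ⟨i, rfl⟩ hb, h j]
    exact .inl ⟨s, fun hs => ha ⟨_, .inl (.inl ⟨s, hs, rfl⟩), le_rfl⟩, rfl⟩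
  · obtain ⟨t, rfl⟩ := (Finsupp.mem_range_mapDomain_iff _ Sum.inr_injective a).mpr <| by
      rintro (i | j) hb
      exacts [h i, absurd ⟨j, rfl⟩ hb]
    exact .inr ⟨t, fun ht => ha ⟨_, .inl (.inr ⟨t, ht, rfl⟩), le_rfl⟩, rfl⟩

theorem add_mem_upperClosure_of_ne_zero (hd : IsConnectedSumData I J af ag) (haf : af ≠ 0)
    {v : (σ ⊕ τ) →₀ ℕ} (hv : v ≠ 0) :
    mapDomain Sum.inl af + v ∈ upperClosure (monomialPartExps I J) ∧
      mapDomain Sum.inr ag + v ∈ upperClosure (monomialPartExps I J) := by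
  obtain ⟨i₀, hi₀⟩ := Finsupp.ne_iff.mp haf
  obtain ⟨j₀, hj₀⟩ := Finsupp.ne_iff.mp (hd.eq_zero_iff.not.mp haf)
  obtain ⟨z, hz⟩ := Finsupp.ne_iff.mp hv
  have hle : ∀ w, w + Finsupp.single z 1 ≤ w + v := fun w =>
    add_le_add_right (Finsupp.single_le_iff.mpr (Nat.one_le_iff_ne_zero.mpr hz)) w
  have hsingle : ∀ {x : σ ⊕ τ} {w : (σ ⊕ τ) →₀ ℕ}, w x ≠ 0 → Finsupp.single x 1 ≤ w :=
    fun hw => Finsupp.single_le_iff.mpr (Nat.one_le_iff_ne_zero.mpr hw)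
  refine ⟨(upperClosure _).upper (hle _) ?_, (upperClosure _).upper (hle _) ?_⟩
  · rcases z with i | j
    · refine ⟨_, .inl (.inl ⟨_, hd.socle_left.add_single_mem i, rfl⟩), ?_⟩
      rw [Finsupp.mapDomain_add, Finsupp.mapDomain_single]
    · refine ⟨_, .inr ⟨(i₀, j), rfl⟩, add_le_add_left (hsingle ?_) _⟩
      simpa using hi₀
  · rcases z with i | j
    · refine ⟨_, .inr ⟨(i, j₀), rfl⟩, ?_⟩
      rw [add_comm]
      refine add_le_add_right (hsingle ?_) _
      simpa using hj₀
    · refine ⟨_, .inl (.inr ⟨_, hd.socle_right.add_single_mem j, rfl⟩), ?_⟩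
      rw [Finsupp.mapDomain_add, Finsupp.mapDomain_single]

theorem socleDiff_eq : socleDiff af ag = monomial (mapDomain Sum.inl af) (1 : K) -
    monomial (mapDomain (Sum.inr : τ → σ ⊕ τ) ag) 1 := by
  simp [socleDiff, rename_monomial]

theorem socleDiff_mul_sub_mem_monomialPart (hd : IsConnectedSumData I J af ag)
    (t : MvPolynomial (σ ⊕ τ) K) :
    socleDiff af ag * (t - C (constantCoeff t)) ∈ monomialPart I J := by
  classical
  rcases eq_or_ne af 0 with haf | haf
  · simp [socleDiff, haf, hd.eq_zero_iff.mp haf]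
  rw [mem_monomialPart_iff hd.isMonomial_left hd.isMonomial_right]
  intro a ha
  obtain ⟨u, hu, v, hv, rfl⟩ := Finset.mem_add.mp (support_mul _ _ ha)
  have hv0 : v ≠ 0 := by
    rintro rfl
    simp [constantCoeff_eq] at hv
  obtain ⟨hF, hG⟩ := add_mem_upperClosure_of_ne_zero hd haf hv0
  rw [socleDiff_eq] at hu
  rcases Finset.mem_union.mp (support_sub _ _ _ hu) with hu | hu <;>
    obtain rfl := Finset.mem_singleton.mp (support_monomial_subset hu)
  exacts [hF, hG]

theorem exists_sub_C_mul_socleDiff_mem (hd : IsConnectedSumData I J af ag)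
    {q : MvPolynomial (σ ⊕ τ) K} (hq : q ∈ connectedSumIdeal I J af ag) :
    ∃ c, q - C c * socleDiff af ag ∈ monomialPart I J := by
  obtain ⟨p, hp, r, hr, rfl⟩ := Submodule.mem_sup.mp hq
  obtain ⟨t, rfl⟩ := Ideal.mem_span_singleton'.mp hr
  refine ⟨constantCoeff t, ?_⟩
  convert add_mem hp (socleDiff_mul_sub_mem_monomialPart hd t) using 1
  ring

theorem coeff_socle_add_coeff_socle_eq_zero (hd : IsConnectedSumData I J af ag)
    {q : MvPolynomial (σ ⊕ τ) K} (hq : q ∈ connectedSumIdeal I J af ag)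
    {a : (σ ⊕ τ) →₀ ℕ} (ha : a ∉ upperClosure (monomialPartExps I J)) (hqa : coeff a q ≠ 0) :
    mapDomain Sum.inl af ≠ mapDomain Sum.inr ag ∧
      (a = mapDomain Sum.inl af ∨ a = mapDomain Sum.inr ag) ∧
      coeff (mapDomain Sum.inl af) q + coeff (mapDomain Sum.inr ag) q = 0 := by
  classical
  obtain ⟨c, hc⟩ := exists_sub_C_mul_socleDiff_mem hd hq
  have hcoeff : ∀ b ∉ upperClosure (monomialPartExps I J),
      coeff b q = c * coeff b (socleDiff af ag) := fun b hb => by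
    by_contra hne
    refine hb ((mem_monomialPart_iff hd.isMonomial_left hd.isMonomial_right).mp hc b ?_)
    rwa [mem_support_iff, coeff_sub, coeff_C_mul, sub_ne_zero]
  have hF := mt (mapDomain_inl_mem_upperClosure_iff hd.ne_top_right).mp hd.socle_left.notMem
  have hG := mt (mapDomain_inr_mem_upperClosure_iff hd.ne_top_left).mp hd.socle_right.notMem
  rw [hcoeff a ha] at hqa
  rw [hcoeff _ hF, hcoeff _ hG]
  simp only [socleDiff_eq, coeff_sub, coeff_monomial] at hqa ⊢
  by_cases hFG : mapDomain Sum.inl af = mapDomain (Sum.inr : τ → σ ⊕ τ) ag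
  · simp [hFG] at hqa
  refine ⟨hFG, ?_, by simp [hFG, Ne.symm hFG]⟩
  by_contra! h
  simp [Ne.symm h.1, Ne.symm h.2] at hqa

theorem IsConnectedSumData.socle_eq_iff (hd : IsConnectedSumData I J af ag) :
    mapDomain Sum.inl af = mapDomain Sum.inr ag ↔ af = 0 := by
  rw [mapDomain_inl_eq_mapDomain_inr_iff, ← hd.eq_zero_iff, and_self]

theorem monomial_mem_of_mem_upperClosure (hd : IsConnectedSumData I J af ag)
    {a : (σ ⊕ τ) →₀ ℕ} (ha : a ∈ upperClosure (monomialPartExps I J)) :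
    monomial a (1 : K) ∈ connectedSumIdeal I J af ag := by
  refine Submodule.mem_sup_left
    ((mem_monomialPart_iff hd.isMonomial_left hd.isMonomial_right).mpr fun b hb => ?_)
  rwa [Finset.mem_singleton.mp (support_monomial_subset hb)]

theorem comap_rename_inl (hd : IsConnectedSumData I J af ag) :
    (connectedSumIdeal I J af ag).comap (rename Sum.inl) = I := by
  classical
  refine le_antisymm (fun p hp => ?_) (Ideal.map_le_iff_le_comap.mp
    (le_sup_left.trans (le_sup_left.trans le_sup_left)))
  rw [hd.isMonomial_left.eq_span, mem_ideal_span_monomial_image]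
  refine fun s hs => ⟨s, by_contra fun hsI => ?_, le_rfl⟩
  have hs' : coeff (mapDomain Sum.inl s) (rename (Sum.inl : σ → σ ⊕ τ) p) ≠ 0 := by
    rwa [coeff_rename_mapDomain _ Sum.inl_injective, ← mem_support_iff]
  obtain ⟨hFG, hsF | hsG, hsum⟩ := coeff_socle_add_coeff_socle_eq_zero hd hp
    (mt (mapDomain_inl_mem_upperClosure_iff hd.ne_top_right).mp hsI) hs'
  · have hag : ag ≠ 0 := hd.eq_zero_iff.not.mp (mt hd.socle_eq_iff.mpr hFG)
    rw [coeff_rename_eq_zero _ _ _ fun u hu =>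
      absurd (mapDomain_inl_eq_mapDomain_inr_iff.mp hu).2 hag, add_zero, ← hsF] at hsum
    exact hs' hsum
  · exact hFG (hd.socle_eq_iff.mpr
      (hd.eq_zero_iff.mpr (mapDomain_inl_eq_mapDomain_inr_iff.mp hsG).2))

theorem comap_rename_inr (hd : IsConnectedSumData I J af ag) :
    (connectedSumIdeal I J af ag).comap (rename Sum.inr) = J := by
  classical
  refine le_antisymm (fun p hp => ?_) (Ideal.map_le_iff_le_comap.mp
    (le_sup_right.trans (le_sup_left.trans le_sup_left)))
  rw [hd.isMonomial_right.eq_span, mem_ideal_span_monomial_image]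
  refine fun t ht => ⟨t, by_contra fun htJ => ?_, le_rfl⟩
  have ht' : coeff (mapDomain Sum.inr t) (rename (Sum.inr : τ → σ ⊕ τ) p) ≠ 0 := by
    rwa [coeff_rename_mapDomain _ Sum.inr_injective, ← mem_support_iff]
  obtain ⟨hFG, htF | htG, hsum⟩ := coeff_socle_add_coeff_socle_eq_zero hd hp
    (mt (mapDomain_inr_mem_upperClosure_iff hd.ne_top_left).mp htJ) ht'
  · exact hFG (hd.socle_eq_iff.mpr (mapDomain_inl_eq_mapDomain_inr_iff.mp htF.symm).1)
  · have haf : af ≠ 0 := mt hd.socle_eq_iff.mpr hFG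
    rw [coeff_rename_eq_zero _ _ _ fun u hu =>
      absurd (mapDomain_inl_eq_mapDomain_inr_iff.mp hu.symm).1 haf, zero_add, ← htG] at hsum
    exact ht' hsum

theorem exists_eq_mapDomain_inl_of_monomial_notMem (hd : IsConnectedSumData I J af ag)
    (s : σ →₀ ℕ) (hs : s ≠ 0) (e : (σ ⊕ τ) →₀ ℕ)
    (he : monomial (mapDomain Sum.inl s + e) (1 : K) ∉ connectedSumIdeal I J af ag) :
    ∃ s', e = mapDomain Sum.inl s' := by
  obtain ⟨i, hi⟩ := Finsupp.ne_iff.mp hs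
  have hinr := (forall_inr_eq_zero_or_forall_inl_eq_zero
    (mt (monomial_mem_of_mem_upperClosure hd) he)).resolve_right fun h => by simp_all
  obtain ⟨s', hs'⟩ := (Finsupp.mem_range_mapDomain_iff _ Sum.inl_injective e).mpr <| by
    rintro (i | j) hb
    exacts [absurd ⟨i, rfl⟩ hb, by simpa using hinr j]
  exact ⟨s', hs'.symm⟩

theorem exists_eq_mapDomain_inr_of_monomial_notMem (hd : IsConnectedSumData I J af ag)
    (t : τ →₀ ℕ) (ht : t ≠ 0) (e : (σ ⊕ τ) →₀ ℕ)
    (he : monomial (mapDomain Sum.inr t + e) (1 : K) ∉ connectedSumIdeal I J af ag) :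
    ∃ t', e = mapDomain Sum.inr t' := by
  obtain ⟨j, hj⟩ := Finsupp.ne_iff.mp ht
  have hinl := (forall_inr_eq_zero_or_forall_inl_eq_zero
    (mt (monomial_mem_of_mem_upperClosure hd) he)).resolve_left fun h => by simp_all
  obtain ⟨t', ht'⟩ := (Finsupp.mem_range_mapDomain_iff _ Sum.inr_injective e).mpr <| by
    rintro (i | j) hb
    exacts [by simpa using hinl i, absurd ⟨j, rfl⟩ hb]
  exact ⟨t', ht'.symm⟩

theorem eq_zero_and_eq_zero_or_eq_socle (hd : IsConnectedSumData I J af ag) {s : σ →₀ ℕ}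
    {t : τ →₀ ℕ} (hs : monomial s (1 : K) ∉ I)
    (h : Ideal.Quotient.mk (connectedSumIdeal I J af ag) (monomial (mapDomain Sum.inl s) 1) =
      Ideal.Quotient.mk _ (monomial (mapDomain Sum.inr t) 1)) :
    s = 0 ∧ t = 0 ∨ s = af ∧ t = ag := by
  classical
  by_cases hst : mapDomain Sum.inl s = mapDomain Sum.inr t
  · exact .inl (mapDomain_inl_eq_mapDomain_inr_iff.mp hst)
  have h1 : coeff (mapDomain Sum.inl s)
      (monomial (mapDomain Sum.inl s) (1 : K) - monomial (mapDomain Sum.inr t) 1) = 1 := by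
    simp [coeff_monomial, Ne.symm hst]
  obtain ⟨hFG, hsF | hsG, hsum⟩ := coeff_socle_add_coeff_socle_eq_zero hd
    (Ideal.Quotient.eq.mp h) (mt (mapDomain_inl_mem_upperClosure_iff hd.ne_top_right).mp hs)
    (by rw [h1]; exact one_ne_zero)
  · obtain rfl : s = af := Finsupp.mapDomain_injective Sum.inl_injective hsF
    refine .inr ⟨rfl, Finsupp.mapDomain_injective (Sum.inr_injective (α := σ)) ?_⟩
    by_contra htg
    simp [coeff_monomial, hFG, htg, Ne.symm hst] at hsum
  · exact absurd (hd.socle_eq_iff.mpr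
      (hd.eq_zero_iff.mpr (mapDomain_inl_eq_mapDomain_inr_iff.mp hsG).2)) hFG

variable {mA : MonPoset I} {mB : MonPoset J}

theorem map_inl_oneMon_eq_map_inr_oneMon (hd : IsConnectedSumData I J af ag) :
    (oneMon I hd.ne_top_left).map Sum.inl (comap_rename_inl hd) =
      (oneMon J hd.ne_top_right).map Sum.inr (comap_rename_inr hd) :=
  Subtype.ext ((MonPoset.map_oneMon_val _).trans (MonPoset.map_oneMon_val _).symm)

theorem map_inl_eq_map_inr_of_socle (hd : IsConnectedSumData I J af ag)
    (hmA : mA.1 = Ideal.Quotient.mk I (monomial af 1))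
    (hmB : mB.1 = Ideal.Quotient.mk J (monomial ag 1)) :
    mA.map Sum.inl (comap_rename_inl hd) = mB.map Sum.inr (comap_rename_inr hd) := by
  refine Subtype.ext ?_
  rw [MonPoset.map_val hmA, MonPoset.map_val hmB, Ideal.Quotient.eq, ← socleDiff_eq]
  exact Submodule.mem_sup_right (Ideal.mem_span_singleton_self _)

theorem eq_oneMon_or_eq_of_map_inl_eq_map_inr (hd : IsConnectedSumData I J af ag)
    (hmA : mA.1 = Ideal.Quotient.mk I (monomial af 1))
    (hmB : mB.1 = Ideal.Quotient.mk J (monomial ag 1)) {c : MonPoset I} {d : MonPoset J}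
    (h : c.map Sum.inl (comap_rename_inl hd) = d.map Sum.inr (comap_rename_inr hd)) :
    c = oneMon I hd.ne_top_left ∧ d = oneMon J hd.ne_top_right ∨ c = mA ∧ d = mB := by
  obtain ⟨s, hs⟩ := c.2.2
  obtain ⟨t, ht⟩ := d.2.2
  rcases eq_zero_and_eq_zero_or_eq_socle hd (c.monomial_notMem hs)
    (by rw [← MonPoset.map_val (hQ := comap_rename_inl hd) hs,
      ← MonPoset.map_val (hQ := comap_rename_inr hd) ht, h]) with ⟨rfl, rfl⟩ | ⟨rfl, rfl⟩
  · exact .inl ⟨Subtype.ext (by rw [hs, monomial_zero', C_1]; rfl),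
      Subtype.ext (by rw [ht, monomial_zero', C_1]; rfl)⟩
  · exact .inr ⟨Subtype.ext (hs.trans hmA.symm), Subtype.ext (ht.trans hmB.symm)⟩

theorem exists_map_inl_eq_or_exists_map_inr_eq (hd : IsConnectedSumData I J af ag)
    (z : MonPoset (connectedSumIdeal I J af ag)) :
    (∃ c : MonPoset I, c.map Sum.inl (comap_rename_inl hd) = z) ∨
      ∃ d : MonPoset J, d.map Sum.inr (comap_rename_inr hd) = z := by
  obtain ⟨hz, a, ha⟩ := z.2
  have hna : a ∉ upperClosure (monomialPartExps I J) := fun h => hz (by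
    rw [ha, Ideal.Quotient.eq_zero_iff_mem]
    exact monomial_mem_of_mem_upperClosure hd h)
  rcases exists_eq_mapDomain_of_notMem_upperClosure hna with ⟨s, hs, rfl⟩ | ⟨t, ht, rfl⟩
  · exact .inl ⟨⟨_, monClass_mk_monomial hs⟩,
      Subtype.ext ((MonPoset.map_val rfl).trans ha.symm)⟩
  · exact .inr ⟨⟨_, monClass_mk_monomial ht⟩,
      Subtype.ext ((MonPoset.map_val rfl).trans ha.symm)⟩

end ConnectedSum

theorem monPoset_connectedSum_eq_closedProd_general {K : Type*} [Field K] (n m : ℕ)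
    (I : Ideal (MvPolynomial (Fin n) K)) (J : Ideal (MvPolynomial (Fin m) K))
    (hIproper : I ≠ ⊤) (hJproper : J ≠ ⊤)
    (hImon : IsMonomialIdeal I) (hJmon : IsMonomialIdeal J)
    (af : Fin n →₀ ℕ) (ag : Fin m →₀ ℕ)
    (hdeg : (af.sum fun _ k => k) = ag.sum fun _ k => k)
    (mA : MonPoset I) (mB : MonPoset J)
    (hmA : mA.1 = Ideal.Quotient.mk I (monomial af (1 : K)))
    (hmB : mB.1 = Ideal.Quotient.mk J (monomial ag (1 : K)))
    (hmaxA : (∀ c : MonPoset I, monDvd I mA c → c = mA) ∧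
      ∀ c : MonPoset I, (∀ c', monDvd I c c' → c' = c) → c = mA)
    (hmaxB : (∀ c : MonPoset J, monDvd J mB c → c = mB) ∧
      ∀ c : MonPoset J, (∀ c', monDvd J c c' → c' = c) → c = mB)
    (Q : Ideal (MvPolynomial (Fin n ⊕ Fin m) K))
    (hQ : Q = Ideal.map (rename (Sum.inl : Fin n → Fin n ⊕ Fin m)).toRingHom I ⊔
        Ideal.map (rename (Sum.inr : Fin m → Fin n ⊕ Fin m)).toRingHom J ⊔
        Ideal.span {p : MvPolynomial (Fin n ⊕ Fin m) K |
          ∃ i j, p = X (Sum.inl i) * X (Sum.inr j)} ⊔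
        Ideal.span {rename (Sum.inl : Fin n → Fin n ⊕ Fin m) (monomial af (1 : K)) -
          rename (Sum.inr : Fin m → Fin n ⊕ Fin m) (monomial ag (1 : K))}) :
    ∃ e : MonPoset Q ≃ ClosedProd (oneMon I hIproper) mA (oneMon J hJproper) mB,
      ∀ u v : MonPoset Q,
        monDvd Q u v ↔
          closedLE (monDvd I) (monDvd J) (oneMon I hIproper) mA (oneMon J hJproper) mB
            (e u) (e v) := by
  obtain rfl : Q = ConnectedSum.connectedSumIdeal I J af ag := hQ
  have hdeg' : Finsupp.degree af = Finsupp.degree ag := hdeg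
  have hd : ConnectedSum.IsConnectedSumData I J af ag :=
    ⟨hImon, hJmon, hIproper, hJproper, hImon.isSocleMonomial hmA hmaxA.1,
      hJmon.isSocleMonomial hmB hmaxB.1,
      by rw [← Finsupp.degree_eq_zero_iff, hdeg', Finsupp.degree_eq_zero_iff]⟩
  have hbij : (ClosedProd.lift _ _ (ConnectedSum.map_inl_oneMon_eq_map_inr_oneMon hd)
      (ConnectedSum.map_inl_eq_map_inr_of_socle hd hmA hmB)).Bijective :=
    ⟨ClosedProd.lift_injective MonPoset.map_injective MonPoset.map_injective
      fun _ _ => ConnectedSum.eq_oneMon_or_eq_of_map_inl_eq_map_inr hd hmA hmB,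
      ClosedProd.lift_surjective (ConnectedSum.exists_map_inl_eq_or_exists_map_inr_eq hd)⟩
  refine ⟨(Equiv.ofBijective _ hbij).symm, fun u v => ?_⟩
  rw [ClosedProd.closedLE_iff_lift (monDvd _) hbij.1 (oneMon_monDvd hIproper)
    (oneMon_monDvd hJproper) (fun _ _ => monDvd_map) (fun _ _ => monDvd_map)
    (fun _ _ => MonPoset.eq_oneMon_or_exists_of_monDvd_map hIproper
      (ConnectedSum.exists_eq_mapDomain_inl_of_monomial_notMem hd))
    (fun _ _ => MonPoset.eq_oneMon_or_exists_of_monDvd_map hJproper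
      (ConnectedSum.exists_eq_mapDomain_inr_of_monomial_notMem hd))]
  simp only [Equiv.ofBijective_apply_symm_apply]

/-- Let `I ⊂ K[x_1,…,x_n]` and `J ⊂ K[y_1,…,y_m]` be proper monomial ideals with
`A = K[x]/I`, `B = K[y]/J` Artinian, such that the monomial posets `M_A`, `M_B` have
unique maximal elements `m_A = f + I`, `m_B = g + J` with `f, g` monomials of the
same total degree. Then the monomial poset of the connected sum `A #_K B`, i.e. of
`T/(I·T + J·T + (x_i y_j) + (f - g))` with `T = K[x,y]`, is isomorphic as a poset to
the closed product `M_A ◇ M_B`. -/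
theorem monPoset_connectedSum_eq_closedProd {K : Type*} [Field K] (n m : ℕ)
    (I : Ideal (MvPolynomial (Fin n) K)) (J : Ideal (MvPolynomial (Fin m) K))
    (hIproper : I ≠ ⊤) (hJproper : J ≠ ⊤)
    (hImon : IsMonomialIdeal I) (hJmon : IsMonomialIdeal J)
    (hAart : IsArtinianRing (MvPolynomial (Fin n) K ⧸ I))
    (hBart : IsArtinianRing (MvPolynomial (Fin m) K ⧸ J))
    (af : Fin n →₀ ℕ) (ag : Fin m →₀ ℕ)
    (hdeg : (af.sum fun _ k => k) = ag.sum fun _ k => k)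
    (mA : MonPoset I) (mB : MonPoset J)
    (hmA : mA.1 = Ideal.Quotient.mk I (monomial af (1 : K)))
    (hmB : mB.1 = Ideal.Quotient.mk J (monomial ag (1 : K)))
    (hmaxA : (∀ c : MonPoset I, monDvd I mA c → c = mA) ∧
      ∀ c : MonPoset I, (∀ c', monDvd I c c' → c' = c) → c = mA)
    (hmaxB : (∀ c : MonPoset J, monDvd J mB c → c = mB) ∧
      ∀ c : MonPoset J, (∀ c', monDvd J c c' → c' = c) → c = mB)
    (Q : Ideal (MvPolynomial (Fin n ⊕ Fin m) K))
    (hQ : Q = Ideal.map (rename (Sum.inl : Fin n → Fin n ⊕ Fin m)).toRingHom I ⊔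
        Ideal.map (rename (Sum.inr : Fin m → Fin n ⊕ Fin m)).toRingHom J ⊔
        Ideal.span {p : MvPolynomial (Fin n ⊕ Fin m) K |
          ∃ i j, p = X (Sum.inl i) * X (Sum.inr j)} ⊔
        Ideal.span {rename (Sum.inl : Fin n → Fin n ⊕ Fin m) (monomial af (1 : K)) -
          rename (Sum.inr : Fin m → Fin n ⊕ Fin m) (monomial ag (1 : K))}) :
    ∃ e : MonPoset Q ≃ ClosedProd (oneMon I hIproper) mA (oneMon J hJproper) mB,
      ∀ u v : MonPoset Q,
        monDvd Q u v ↔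
          closedLE (monDvd I) (monDvd J) (oneMon I hIproper) mA (oneMon J hJproper) mB
            (e u) (e v) :=
  monPoset_connectedSum_eq_closedProd_general n m I J hIproper hJproper hImon hJmon af ag hdeg mA mB
    hmA hmB hmaxA hmaxB Q hQ
end

section
/- The monomial poset of ℚ[x,y]/(x⁵, x²y², y⁵) — the 16-element poset of cosets of the monomials 1; x, y; x², xy, y²; x³, x²y, xy², y³; x⁴, x³y, xy³, y⁴; x⁴y, xy⁴ under divisibility, ranked by total degree — is a Macaulay poset, and the total orders witnessing the Macaulay property are, up to the (irrelevant) ordering between elements of different ranks, exactly the following two: the order whose restriction to each rank level is y ≺ x; y² ≺ xy ≺ x²; y³ ≺ xy² ≺ x³ ≺ x²y; y⁴ ≺ xy³ ≺ x⁴ ≺ x³y; xy⁴ ≺ x⁴y, and its image under exchanging x and y. -/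
open MvPolynomial

/-- The ideal `(x⁵, x²y², y⁵)` of `ℚ[x,y]`. -/
noncomputable def heartIdeal : Ideal (MvPolynomial (Fin 2) ℚ) :=
  Ideal.span {(X 0 : MvPolynomial (Fin 2) ℚ) ^ 5, X 0 ^ 2 * X 1 ^ 2, X 1 ^ 5}

/-- Position table of the twist order on the monomial poset of
`ℚ[x,y]/(x⁵, x²y², y⁵)`, keyed by the exponents of `x` and `y`; within each total
degree the values increase according to
`y ≺ x`; `y² ≺ xy ≺ x²`; `y³ ≺ xy² ≺ x³ ≺ x²y`; `y⁴ ≺ xy³ ≺ x⁴ ≺ x³y`;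
`xy⁴ ≺ x⁴y`. -/
def twistTable : ℕ → ℕ → ℕ
  | 0, 0 => 0
  | 0, 1 => 10 -- y
  | 1, 0 => 11 -- x
  | 0, 2 => 20 -- y²
  | 1, 1 => 21 -- xy
  | 2, 0 => 22 -- x²
  | 0, 3 => 30 -- y³
  | 1, 2 => 31 -- xy²
  | 3, 0 => 32 -- x³
  | 2, 1 => 33 -- x²y
  | 0, 4 => 40 -- y⁴
  | 1, 3 => 41 -- xy³
  | 4, 0 => 42 -- x⁴
  | 3, 1 => 43 -- x³y
  | 1, 4 => 50 -- xy⁴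
  | 4, 1 => 51 -- x⁴y
  | _, _ => 0

/-- The order on monomial cosets induced by a position table on the exponents
(first argument: exponent of `x`, second: exponent of `y`). -/
def tableOrder (tbl : ℕ → ℕ → ℕ) (c c' : MonPoset heartIdeal) : Prop :=
  ∃ a b : Fin 2 →₀ ℕ,
    c.1 = Ideal.Quotient.mk heartIdeal (monomial a (1 : ℚ)) ∧
    c'.1 = Ideal.Quotient.mk heartIdeal (monomial b (1 : ℚ)) ∧
    tbl (a 0) (a 1) ≤ tbl (b 0) (b 1)

/-!
The monomial poset is finite: sending `(i, j)` to the coset of `xⁱyʲ` identifies it with the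
sixteen exponent pairs with `i, j < 5` and `min i j < 2`, ordered componentwise and ranked by
`i + j`. Listing each rank level in increasing order of a total order turns the Macaulay
property into a decidable condition on each pair of consecutive level lists, settled by
exhausting orderings from the top: level 5 has only the orderings `xy⁴ ≺ x⁴y` and its mirror
image; for each, exactly one ordering of level 4 meets the condition into level 5 and admits a
valid ordering of level 3 below it; further down, every level is forced by the one above. The
two resulting families are the twist order and its mirror image, and both meet the condition
throughout.
-/

section Transfer

variable {α β : Type*} (e : β ≃ α) {le t : α → α → Prop} {le' t' : β → β → Prop}
  {r : α → ℕ} {r' : β → ℕ}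

theorem coversR_equiv_iff (hle : ∀ u v, le (e u) (e v) ↔ le' u v) (u v : β) :
    CoversR le (e u) (e v) ↔ CoversR le' u v := by
  rw [CoversR, CoversR, ← e.forall_congr_right]
  simp only [hle, e.injective.ne_iff, e.apply_eq_iff_eq]

theorem upperShadowR_image_equiv (hle : ∀ u v, le (e u) (e v) ↔ le' u v) (A : Set β) :
    UpperShadowR le (e '' A) = e '' UpperShadowR le' A := by
  ext q
  obtain ⟨q, rfl⟩ := e.surjective q
  simp only [UpperShadowR, e.injective.mem_set_image, Set.mem_ofPred_eq, Set.exists_mem_image,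
    coversR_equiv_iff e hle]

theorem isInitialSegIn_image_equiv_iff (ht : ∀ u v, t (e u) (e v) ↔ t' u v) (L S : Set β) :
    IsInitialSegIn t (e '' L) (e '' S) ↔ IsInitialSegIn t' L S := by
  simp only [IsInitialSegIn, Set.image_subset_image_iff e.injective, Set.forall_mem_image, ht,
    e.injective.mem_set_image]

theorem image_equiv_setOf_eq (hr : ∀ u, r (e u) = r' u) (d : ℕ) :
    e '' {p | r' p = d} = {p | r p = d} := by
  ext x
  obtain ⟨x, rfl⟩ := e.surjective x
  simp [hr]

theorem MacaulayWith.of_equiv (hle : ∀ u v, le (e u) (e v) ↔ le' u v)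
    (ht : ∀ u v, t (e u) (e v) ↔ t' u v) (hr : ∀ u, r (e u) = r' u)
    (h : MacaulayWith le r t) : MacaulayWith le' r' t' := by
  intro d A hA S hS hcard
  have key := h d (e '' A) (image_equiv_setOf_eq e hr d ▸ Set.image_mono hA) (e '' S)
    (by rwa [← image_equiv_setOf_eq e hr, isInitialSegIn_image_equiv_iff e ht])
    (by rwa [Set.ncard_image_of_injective _ e.injective,
      Set.ncard_image_of_injective _ e.injective])
  rwa [upperShadowR_image_equiv e hle, upperShadowR_image_equiv e hle,
    Set.ncard_image_of_injective _ e.injective, Set.ncard_image_of_injective _ e.injective,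
    ← image_equiv_setOf_eq e hr, isInitialSegIn_image_equiv_iff e ht] at key

theorem macaulayWith_equiv_iff (hle : ∀ u v, le (e u) (e v) ↔ le' u v)
    (ht : ∀ u v, t (e u) (e v) ↔ t' u v) (hr : ∀ u, r (e u) = r' u) :
    MacaulayWith le r t ↔ MacaulayWith le' r' t' :=
  ⟨MacaulayWith.of_equiv e hle ht hr,
    MacaulayWith.of_equiv e.symm (fun u v => by rw [← hle, e.apply_symm_apply, e.apply_symm_apply])
      (fun u v => by rw [← ht, e.apply_symm_apply, e.apply_symm_apply])
      (fun u => by rw [← hr, e.apply_symm_apply])⟩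

theorem IsRankFunctionR.of_equiv (hle : ∀ u v, le (e u) (e v) ↔ le' u v)
    (hr : ∀ u, r (e u) = r' u) (h : IsRankFunctionR le' r') : IsRankFunctionR le r := by
  refine ⟨fun p hp => ?_, fun p q hpq => ?_⟩
  · obtain ⟨p, rfl⟩ := e.surjective p
    rw [hr]
    exact h.1 p fun q hq => e.injective (hp (e q) ((hle q p).2 hq))
  · obtain ⟨p, rfl⟩ := e.surjective p
    obtain ⟨q, rfl⟩ := e.surjective q
    rw [hr, hr]
    exact h.2 p q ((coversR_equiv_iff e hle p q).1 hpq)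

theorem IsLinearOrder.of_equiv (ht : ∀ u v, t (e u) (e v) ↔ t' u v) (h : IsLinearOrder α t) :
    IsLinearOrder β t' := by
  obtain rfl : t' = e.toEmbedding ⁻¹'o t := by
    ext u v
    exact (ht u v).symm
  exact (RelEmbedding.preimage e.toEmbedding t).isLinearOrder

end Transfer

namespace List

variable {α : Type*} {s r : α → α → Prop} {l : List α}

theorem Nodup.ncard_setOf_mem (h : l.Nodup) : {x | x ∈ l}.ncard = l.length := by
  classical
  rw [← coe_toFinset, Set.ncard_coe_finset, toFinset_card_of_nodup h]

theorem Pairwise.exists_drop_eq (hl : l.Pairwise s) {S : Set α} (hsub : S ⊆ {x | x ∈ l})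
    (hup : ∀ a ∈ S, ∀ b ∈ l, s a b → b ∈ S) : ∃ i ≤ l.length, S = {x | x ∈ l.drop i} := by
  induction l with
  | nil => exact ⟨0, le_rfl, hsub.antisymm (by simp)⟩
  | cons c l ih =>
    rw [pairwise_cons] at hl
    by_cases hc : c ∈ S
    · refine ⟨0, Nat.zero_le _, hsub.antisymm ?_⟩
      intro x hx
      rcases mem_cons.1 hx with rfl | hx
      exacts [hc, hup c hc x (mem_cons_of_mem c hx) (hl.1 x hx)]
    · obtain ⟨i, hi, rfl⟩ := ih hl.2
        (fun x hx => (mem_cons.1 (hsub hx)).resolve_left (ne_of_mem_of_not_mem hx hc))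
        (fun a ha b hb => hup a ha b (mem_cons_of_mem c hb))
      exact ⟨i + 1, Nat.succ_le_succ hi, rfl⟩

theorem Pairwise.mem_drop_of_rel (hl : l.Pairwise s) (hnd : l.Nodup)
    (hanti : ∀ a b, s a b → s b a → a = b) {i : ℕ} {a b : α} (ha : a ∈ l.drop i) (hb : b ∈ l)
    (hab : s a b) : b ∈ l.drop i := by
  induction l generalizing i with
  | nil => simp at ha
  | cons c l ih =>
    rw [pairwise_cons] at hl
    rw [nodup_cons] at hnd
    cases i with
    | zero => exact hb
    | succ i =>
      rw [drop_succ_cons] at ha ⊢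
      rcases mem_cons.1 hb with rfl | hb
      · have hal := drop_subset i l ha
        exact absurd (hanti a b hab (hl.1 a hal) ▸ hal) hnd.1
      · exact ih hl.2 hnd.2 ha hb

theorem Pairwise.rel_of_pairwise (hs : l.Pairwise s) (hr : l.Pairwise r)
    (hanti : ∀ a ∈ l, ∀ b ∈ l, s a b → s b a → a = b) (hrefl : ∀ a ∈ l, r a a) {a b : α}
    (ha : a ∈ l) (hb : b ∈ l) (hab : s a b) : r a b := by
  induction l with
  | nil => simp at ha
  | cons c l ih =>
    rw [pairwise_cons] at hs hr
    rcases mem_cons.1 ha with rfl | ha'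
    · rcases mem_cons.1 hb with rfl | hb'
      exacts [hrefl _ ha, hr.1 _ hb']
    · rcases mem_cons.1 hb with rfl | hb'
      · obtain rfl := hanti _ ha _ hb hab (hs.1 _ ha')
        exact hrefl _ ha
      · exact ih hs.2 hr.2
          (fun x hx y hy => hanti x (mem_cons_of_mem c hx) y (mem_cons_of_mem c hy))
          (fun x hx => hrefl x (mem_cons_of_mem c hx)) ha' hb'

end List

theorem isInitialSegIn_setOf_mem_iff {α : Type*} {s : α → α → Prop} {l : List α}
    (hl : l.Pairwise s) (hnd : l.Nodup) (hanti : ∀ a b, s a b → s b a → a = b) {S : Set α} :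
    IsInitialSegIn s {x | x ∈ l} S ↔ ∃ i ≤ l.length, S = {x | x ∈ l.drop i} :=
  ⟨fun h => hl.exists_drop_eq h.1 h.2, by
    rintro ⟨i, -, rfl⟩
    exact ⟨fun x hx => List.drop_subset i l hx,
      fun a ha b hb hab => hl.mem_drop_of_rel hnd hanti ha hb hab⟩⟩

/-- Exponent pairs `(i, j)` of the monomials `xⁱyʲ` outside `(x⁵, x²y², y⁵)`, with the
componentwise order, which is divisibility of monomials. -/
abbrev HeartExp : Type := {v : Fin 5 × Fin 5 // (v.1 : ℕ) < 2 ∨ (v.2 : ℕ) < 2}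

namespace HeartExp

def deg (u : HeartExp) : ℕ := u.1.1 + u.1.2

def tableKey (tbl : ℕ → ℕ → ℕ) (u : HeartExp) : ℕ := tbl u.1.1 u.1.2

def twistKeys : List (HeartExp → ℕ) :=
  [tableKey twistTable, tableKey fun i j => twistTable j i]

def all : List HeartExp :=
  ((List.finRange 5).product (List.finRange 5)).filterMap fun v =>
    if h : (v.1 : ℕ) < 2 ∨ (v.2 : ℕ) < 2 then some ⟨v, h⟩ else none

def level (d : ℕ) : List HeartExp := all.filter (deg · = d)

def sortedLevel (k : HeartExp → ℕ) (d : ℕ) : List HeartExp :=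
  (level d).insertionSort (k · ≤ k ·)

def shadow (A : List HeartExp) : List HeartExp :=
  all.filter fun q => A.any fun a => decide (a ≤ q ∧ deg q = deg a + 1)

/-- The Macaulay conditions between two consecutive levels listed in increasing order as
`P` and `Q`: the `|A|` largest elements of `P` have the smallest shadow among all `|A|`-subsets
`A`, and this shadow consists of the largest elements of `Q`. -/
def MacaulayStep (P Q : List HeartExp) : Prop :=
  ∀ A ∈ P.sublists,
    (shadow (P.drop (P.length - A.length))).length ≤ (shadow A).length ∧
      ∃ i ≤ Q.length, (shadow (P.drop (P.length - A.length))).Perm (Q.drop i)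

instance : DecidableRel MacaulayStep := fun P Q => by
  unfold MacaulayStep; infer_instance

set_option synthInstance.maxSize 1000 in
theorem coversR_iff {u v : HeartExp} : CoversR (· ≤ ·) u v ↔ u ≤ v ∧ deg v = deg u + 1 := by
  have : ∀ u v : HeartExp, CoversR (· ≤ ·) u v ↔ u ≤ v ∧ deg v = deg u + 1 := by
    unfold CoversR; beta_reduce; decide
  exact this u v

theorem mem_all (u : HeartExp) : u ∈ all := by
  revert u; decide

theorem deg_le (u : HeartExp) : deg u ≤ 5 := by
  revert u; decide

theorem nodup_all : all.Nodup := by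
  decide +kernel

theorem mem_level {u : HeartExp} {d : ℕ} : u ∈ level d ↔ deg u = d := by
  simp [level, mem_all]

theorem nodup_level (d : ℕ) : (level d).Nodup :=
  nodup_all.filter _

theorem level_eq_nil {d : ℕ} (hd : 5 < d) : level d = [] :=
  List.filter_eq_nil_iff.2 fun u _ => by
    have := deg_le u
    simp only [decide_eq_true_eq]
    omega

theorem nodup_shadow (A : List HeartExp) : (shadow A).Nodup :=
  nodup_all.filter _

theorem upperShadowR_setOf_mem (A : List HeartExp) :
    UpperShadowR (· ≤ ·) {x | x ∈ A} = {x | x ∈ shadow A} := by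
  ext q
  simp [UpperShadowR, shadow, coversR_iff, mem_all]

theorem isRankFunctionR_deg : IsRankFunctionR (· ≤ ·) deg :=
  ⟨fun p hp => by rw [← hp ⟨(0, 0), by decide⟩ ⟨Fin.zero_le _, Fin.zero_le _⟩]; rfl,
    fun _ _ h => (coversR_iff.1 h).2⟩

theorem mem_sortedLevel {k : HeartExp → ℕ} {u : HeartExp} {d : ℕ} :
    u ∈ sortedLevel k d ↔ deg u = d :=
  (List.perm_insertionSort _ _).mem_iff.trans mem_level

theorem sortedLevel_eq_nil (k : HeartExp → ℕ) {d : ℕ} (hd : 5 < d) : sortedLevel k d = [] := by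
  rw [sortedLevel, level_eq_nil hd, List.insertionSort_nil]

theorem pairwise_sortedLevel (k : HeartExp → ℕ) (d : ℕ) :
    (sortedLevel k d).Pairwise (k · ≤ k ·) :=
  haveI : Std.Total (k · ≤ k ·) := ⟨fun _ _ => le_total _ _⟩
  haveI : IsTrans HeartExp (k · ≤ k ·) := ⟨fun _ _ _ => le_trans⟩
  List.pairwise_insertionSort _ _

theorem twistKeys_injective : ∀ k ∈ twistKeys, ∀ u v, k u = k v → u = v := by
  decide +kernel

theorem macaulayStep_sortedLevel :
    ∀ k ∈ twistKeys, ∀ d ≤ 5, MacaulayStep (sortedLevel k d) (sortedLevel k (d + 1)) := by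
  decide +kernel

theorem exists_eq_sortedLevel_five :
    ∀ p ∈ (level 5).permutations', ∃ k ∈ twistKeys, p = sortedLevel k 5 := by
  decide +kernel

theorem eq_sortedLevel_four_of_macaulayStep :
    ∀ k ∈ twistKeys, ∀ p ∈ (level 4).permutations', MacaulayStep p (sortedLevel k 5) →
      (∃ q ∈ (level 3).permutations', MacaulayStep q p) → p = sortedLevel k 4 := by
  decide +kernel

theorem eq_sortedLevel_of_macaulayStep_sortedLevel_succ :
    ∀ k ∈ twistKeys, ∀ d < 4, ∀ p ∈ (level d).permutations',
      MacaulayStep p (sortedLevel k (d + 1)) → p = sortedLevel k d := by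
  decide +kernel

section Bridge

variable {s : HeartExp → HeartExp → Prop}

theorem isInitialSegIn_level_iff (hanti : ∀ a b, s a b → s b a → a = b) {d : ℕ}
    {L : List HeartExp} (hL : L.Perm (level d)) (hs : L.Pairwise s) {S : Set HeartExp} :
    IsInitialSegIn s {p | deg p = d} S ↔ ∃ i ≤ L.length, S = {x | x ∈ L.drop i} := by
  have hlevel : {p | deg p = d} = {x | x ∈ L} := by
    ext
    simp [hL.mem_iff, mem_level]
  rw [hlevel]
  exact isInitialSegIn_setOf_mem_iff hs (hL.nodup_iff.2 (nodup_level d)) hanti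

theorem macaulayWith_iff_forall_macaulayStep (hanti : ∀ a b, s a b → s b a → a = b)
    {P : ℕ → List HeartExp} (hP : ∀ d, (P d).Perm (level d)) (hs : ∀ d, (P d).Pairwise s) :
    MacaulayWith (· ≤ ·) deg s ↔ ∀ d, MacaulayStep (P d) (P (d + 1)) := by
  have hseg (d : ℕ) (S : Set HeartExp) := isInitialSegIn_level_iff (S := S) hanti (hP d) (hs d)
  have hnd d : (P d).Nodup := (hP d).nodup_iff.2 (nodup_level d)
  have hndrop d i : ((P d).drop i).Nodup := (hnd d).sublist (List.drop_sublist _ _)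
  have hcard (A : List HeartExp) :
      (UpperShadowR (· ≤ ·) {x | x ∈ A}).ncard = (shadow A).length := by
    rw [upperShadowR_setOf_mem, (nodup_shadow A).ncard_setOf_mem]
  constructor
  · intro hM d A hA
    have hAP := List.mem_sublists.1 hA
    obtain ⟨h1, h2⟩ := hM d {x | x ∈ A} (fun x hx => mem_level.1 ((hP d).mem_iff.1 (hAP.subset hx)))
      _ ((hseg d _).2 ⟨(P d).length - A.length, Nat.sub_le _ _, rfl⟩) (by
        rw [(hndrop d _).ncard_setOf_mem, (hAP.nodup (hnd d)).ncard_setOf_mem, List.length_drop]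
        have := hAP.length_le
        omega)
    rw [hcard, hcard] at h1
    obtain ⟨i, hi, h⟩ := (hseg (d + 1) _).1 (upperShadowR_setOf_mem _ ▸ h2)
    exact ⟨h1, i, hi,
      (List.perm_ext_iff_of_nodup (nodup_shadow _) (hndrop _ _)).2 (Set.ext_iff.1 h)⟩
  · intro h d A hA S hS hSA
    obtain ⟨i, hi, rfl⟩ := (hseg d _).1 hS
    classical
    obtain ⟨A', hA'P, rfl⟩ : ∃ A' : List HeartExp, A'.Sublist (P d) ∧ {x | x ∈ A'} = A :=
      ⟨(P d).filter (· ∈ A), List.filter_sublist, by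
        ext x
        simpa [(hP d).mem_iff, mem_level] using fun hx => hA hx⟩
    rw [(hndrop d i).ncard_setOf_mem, (hA'P.nodup (hnd d)).ncard_setOf_mem, List.length_drop]
      at hSA
    obtain ⟨h1, j, hj, hperm⟩ := h d A' (List.mem_sublists.2 hA'P)
    rw [show (P d).length - A'.length = i by omega] at h1 hperm
    rw [hcard, hcard]
    exact ⟨h1, (hseg (d + 1) _).2
      ⟨j, hj, upperShadowR_setOf_mem _ ▸ Set.ext fun x => hperm.mem_iff⟩⟩

end Bridge

theorem exists_eq_sortedLevel_of_macaulayStep {P : ℕ → List HeartExp}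
    (hP : ∀ d, (P d).Perm (level d)) (hstep : ∀ d, MacaulayStep (P d) (P (d + 1))) :
    ∃ k ∈ twistKeys, ∀ d, P d = sortedLevel k d := by
  have hmem d : P d ∈ (level d).permutations' := List.mem_permutations'.2 (hP d)
  obtain ⟨k, hk, h5⟩ := exists_eq_sortedLevel_five _ (hmem 5)
  have h4 : P 4 = sortedLevel k 4 :=
    eq_sortedLevel_four_of_macaulayStep k hk _ (hmem 4) (h5 ▸ hstep 4) ⟨_, hmem 3, hstep 3⟩
  have hlow {d : ℕ} (hd : d ≤ 4) : P d = sortedLevel k d :=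
    Nat.decreasingInduction (motive := fun d _ => P d = sortedLevel k d)
      (fun d hd ih =>
        eq_sortedLevel_of_macaulayStep_sortedLevel_succ k hk d hd _ (hmem d) (ih ▸ hstep d))
      h4 hd
  refine ⟨k, hk, fun d => ?_⟩
  rcases lt_trichotomy d 5 with hd | rfl | hd
  · exact hlow (by omega)
  · exact h5
  · rw [sortedLevel_eq_nil k hd]
    exact List.perm_nil.1 (level_eq_nil hd ▸ hP d)

def AgreesOnLevels (s : HeartExp → HeartExp → Prop) (k : HeartExp → ℕ) : Prop :=
  ∀ u v, deg u = deg v → (s u v ↔ k u ≤ k v)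

theorem macaulayWith_iff_exists_agreesOnLevels {s : HeartExp → HeartExp → Prop}
    (hlin : IsLinearOrder HeartExp s) :
    MacaulayWith (· ≤ ·) deg s ↔ ∃ k ∈ twistKeys, AgreesOnLevels s k := by
  have hanti : ∀ a b, s a b → s b a → a = b := fun _ _ => antisymm_of s
  constructor
  · intro hM
    classical
    have hP d : ((level d).insertionSort s).Perm (level d) := List.perm_insertionSort s _
    have hs d : ((level d).insertionSort s).Pairwise s := List.pairwise_insertionSort s _
    obtain ⟨k, hk, hPk⟩ := exists_eq_sortedLevel_of_macaulayStep hP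
      ((macaulayWith_iff_forall_macaulayStep hanti hP hs).1 hM)
    refine ⟨k, hk, fun u v huv => ?_⟩
    have hu : u ∈ sortedLevel k (deg v) := mem_sortedLevel.2 huv
    have hv : v ∈ sortedLevel k (deg v) := mem_sortedLevel.2 rfl
    have hsk := hPk (deg v) ▸ hs (deg v)
    have hk := pairwise_sortedLevel k (deg v)
    exact ⟨hsk.rel_of_pairwise hk (fun a _ b _ => hanti a b) (fun _ _ => le_rfl) hu hv,
      hk.rel_of_pairwise hsk
        (fun a _ b _ hab hba => twistKeys_injective k ‹_› a b (le_antisymm hab hba))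
        (fun a _ => refl_of s a) hu hv⟩
  · rintro ⟨k, hk, hagree⟩
    have hs d : (sortedLevel k d).Pairwise s :=
      (pairwise_sortedLevel k d).imp_of_mem fun ha hb hab =>
        (hagree _ _ ((mem_sortedLevel.1 ha).trans (mem_sortedLevel.1 hb).symm)).2 hab
    refine (macaulayWith_iff_forall_macaulayStep (P := sortedLevel k) hanti
      (fun d => List.perm_insertionSort _ _) hs).2 fun d => ?_
    rcases le_or_gt d 5 with hd | hd
    · exact macaulayStep_sortedLevel k hk d hd
    · rw [sortedLevel_eq_nil k hd, sortedLevel_eq_nil k (by omega)]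
      decide

end HeartExp

section MonomialIdeal

variable {σ K : Type*} [Field K] {I : Ideal (MvPolynomial σ K)}

theorem isMonomialIdeal_span_monomial (s : Set (σ →₀ ℕ)) :
    IsMonomialIdeal (Ideal.span ((fun a => monomial a (1 : K)) '' s)) := by
  classical
  intro f hf a ha
  rw [mem_ideal_span_monomial_image] at hf ⊢
  rw [support_monomial, if_neg one_ne_zero]
  simpa using hf a ha

theorem monomial_mem_of_le_s11 {a b : σ →₀ ℕ} (hab : a ≤ b) (ha : monomial a (1 : K) ∈ I) :
    monomial b (1 : K) ∈ I := by
  rw [← add_tsub_cancel_of_le hab, ← mul_one (1 : K), ← monomial_mul]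
  exact I.mul_mem_right _ ha

theorem IsMonomialIdeal.eq_of_mk_monomial_eq (hI : IsMonomialIdeal I) {a b : σ →₀ ℕ}
    (ha : monomial a (1 : K) ∉ I)
    (h : Ideal.Quotient.mk I (monomial a 1) = Ideal.Quotient.mk I (monomial b 1)) : a = b := by
  classical
  by_contra hab
  refine ha (hI _ (Ideal.Quotient.eq.1 h) a ?_)
  rw [mem_support_iff, coeff_sub, coeff_monomial, coeff_monomial, if_pos rfl,
    if_neg (Ne.symm hab), sub_zero]
  exact one_ne_zero

end MonomialIdeal

theorem heartIdeal_eq_span_monomial :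
    heartIdeal = Ideal.span ((fun a => monomial a (1 : ℚ)) ''
      {Finsupp.single 0 5, Finsupp.single 0 2 + Finsupp.single 1 2, Finsupp.single 1 5}) := by
  simp only [heartIdeal, Set.image_insert_eq, Set.image_singleton, X_pow_eq_monomial,
    monomial_mul, one_mul]

theorem isMonomialIdeal_heartIdeal : IsMonomialIdeal heartIdeal :=
  heartIdeal_eq_span_monomial ▸ isMonomialIdeal_span_monomial _

theorem monomial_mem_heartIdeal_iff {a : Fin 2 →₀ ℕ} :
    monomial a (1 : ℚ) ∈ heartIdeal ↔ 5 ≤ a 0 ∨ 2 ≤ a 0 ∧ 2 ≤ a 1 ∨ 5 ≤ a 1 := by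
  rw [heartIdeal_eq_span_monomial, mem_ideal_span_monomial_image]
  simp [support_monomial, Finsupp.le_def, Fin.forall_fin_two]

namespace HeartExp

noncomputable def toFinsupp (u : HeartExp) : Fin 2 →₀ ℕ :=
  Finsupp.single 0 (u.1.1 : ℕ) + Finsupp.single 1 (u.1.2 : ℕ)

@[simp]
theorem toFinsupp_zero (u : HeartExp) : u.toFinsupp 0 = u.1.1 := by
  simp [toFinsupp]

@[simp]
theorem toFinsupp_one (u : HeartExp) : u.toFinsupp 1 = u.1.2 := by
  simp [toFinsupp]

theorem toFinsupp_le_toFinsupp {u v : HeartExp} : u.toFinsupp ≤ v.toFinsupp ↔ u ≤ v := by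
  simp only [Finsupp.le_def, Fin.forall_fin_two, toFinsupp_zero, toFinsupp_one]
  rfl

theorem toFinsupp_injective : Function.Injective toFinsupp := fun _ _ h =>
  le_antisymm (toFinsupp_le_toFinsupp.1 h.le) (toFinsupp_le_toFinsupp.1 h.ge)

theorem monomial_toFinsupp_not_mem (u : HeartExp) : monomial u.toFinsupp (1 : ℚ) ∉ heartIdeal := by
  rw [monomial_mem_heartIdeal_iff]
  have hu := u.property
  simp only [toFinsupp_zero, toFinsupp_one]
  omega

theorem exists_toFinsupp_eq {a : Fin 2 →₀ ℕ} (ha : monomial a (1 : ℚ) ∉ heartIdeal) :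
    ∃ u : HeartExp, u.toFinsupp = a := by
  rw [monomial_mem_heartIdeal_iff] at ha
  refine ⟨⟨(⟨a 0, by omega⟩, ⟨a 1, by omega⟩), by simp only; omega⟩, ?_⟩
  ext i
  fin_cases i <;> simp

noncomputable def toMonPoset (u : HeartExp) : MonPoset heartIdeal :=
  ⟨Ideal.Quotient.mk heartIdeal (monomial u.toFinsupp 1),
    Ideal.Quotient.eq_zero_iff_mem.not.2 u.monomial_toFinsupp_not_mem, u.toFinsupp, rfl⟩

theorem toMonPoset_bijective : Function.Bijective toMonPoset := by
  refine ⟨fun u v h => toFinsupp_injective ?_, ?_⟩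
  · exact isMonomialIdeal_heartIdeal.eq_of_mk_monomial_eq u.monomial_toFinsupp_not_mem
      (congrArg Subtype.val h)
  · rintro ⟨_, hc, a, rfl⟩
    obtain ⟨u, rfl⟩ := exists_toFinsupp_eq (Ideal.Quotient.eq_zero_iff_mem.not.1 hc)
    exact ⟨u, rfl⟩

end HeartExp

open HeartExp

noncomputable def heartEquiv : HeartExp ≃ MonPoset heartIdeal :=
  Equiv.ofBijective toMonPoset toMonPoset_bijective

theorem heartEquiv_val (u : HeartExp) :
    (heartEquiv u).1 = Ideal.Quotient.mk heartIdeal (monomial u.toFinsupp 1) :=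
  rfl

theorem eq_toFinsupp_of_heartEquiv_val {u : HeartExp} {a : Fin 2 →₀ ℕ}
    (h : (heartEquiv u).1 = Ideal.Quotient.mk heartIdeal (monomial a 1)) : a = u.toFinsupp :=
  (isMonomialIdeal_heartIdeal.eq_of_mk_monomial_eq u.monomial_toFinsupp_not_mem
    ((heartEquiv_val u).symm.trans h)).symm

instance : Finite (MonPoset heartIdeal) :=
  Finite.of_equiv _ heartEquiv

theorem monDvd_heartEquiv_iff {u v : HeartExp} :
    monDvd heartIdeal (heartEquiv u) (heartEquiv v) ↔ u ≤ v := by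
  rw [← toFinsupp_le_toFinsupp]
  constructor
  · rintro ⟨_, ⟨-, c, rfl⟩, hmul⟩
    rw [heartEquiv_val, ← map_mul, monomial_mul, one_mul] at hmul
    exact eq_toFinsupp_of_heartEquiv_val hmul.symm ▸ le_self_add
  · intro huv
    have hc : monomial (v.toFinsupp - u.toFinsupp) (1 : ℚ) ∉ heartIdeal :=
      fun h => v.monomial_toFinsupp_not_mem (monomial_mem_of_le_s11 tsub_le_self h)
    refine ⟨_, ⟨Ideal.Quotient.eq_zero_iff_mem.not.2 hc, _, rfl⟩, ?_⟩
    rw [heartEquiv_val, heartEquiv_val, ← map_mul, monomial_mul, one_mul,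
      add_tsub_cancel_of_le huv]

theorem tableOrder_heartEquiv_iff (tbl : ℕ → ℕ → ℕ) {u v : HeartExp} :
    tableOrder tbl (heartEquiv u) (heartEquiv v) ↔ tableKey tbl u ≤ tableKey tbl v := by
  constructor
  · rintro ⟨a, b, ha, hb, hab⟩
    rwa [eq_toFinsupp_of_heartEquiv_val ha, eq_toFinsupp_of_heartEquiv_val hb, toFinsupp_zero,
      toFinsupp_one, toFinsupp_zero, toFinsupp_one] at hab
  · intro huv
    exact ⟨_, _, heartEquiv_val u, heartEquiv_val v, by simpa [tableKey] using huv⟩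

theorem isLinearOrder_tableOrder_twistTable :
    IsLinearOrder (MonPoset heartIdeal) (tableOrder twistTable) := by
  let f : MonPoset heartIdeal ↪ ℕ := ⟨fun c => tableKey twistTable (heartEquiv.symm c),
    fun c c' h => heartEquiv.symm.injective (twistKeys_injective _ (by simp [twistKeys]) _ _ h)⟩
  have hf : tableOrder twistTable = f ⁻¹'o (· ≤ ·) := by
    ext c c'
    change _ ↔ tableKey twistTable (heartEquiv.symm c) ≤ tableKey twistTable (heartEquiv.symm c')
    rw [← tableOrder_heartEquiv_iff, Equiv.apply_symm_apply, Equiv.apply_symm_apply]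
  exact hf ▸ (RelEmbedding.preimage f (· ≤ ·)).isLinearOrder

theorem forall_tableOrder_iff_agreesOnLevels {r : MonPoset heartIdeal → ℕ}
    (hr : ∀ u, r (heartEquiv u) = deg u) (t : MonPoset heartIdeal → MonPoset heartIdeal → Prop)
    (tbl : ℕ → ℕ → ℕ) :
    (∀ c c', r c = r c' → (t c c' ↔ tableOrder tbl c c')) ↔
      AgreesOnLevels (fun u v => t (heartEquiv u) (heartEquiv v)) (tableKey tbl) := by
  simp only [AgreesOnLevels, ← heartEquiv.forall_congr_right, hr, tableOrder_heartEquiv_iff]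

/-- The monomial poset of `ℚ[x,y]/(x⁵, x²y², y⁵)`, ranked by total degree, is a
Macaulay poset, and a total order on it witnesses the Macaulay property if and only
if, within each rank level, it agrees with the twist order
`y ≺ x`; `y² ≺ xy ≺ x²`; `y³ ≺ xy² ≺ x³ ≺ x²y`; `y⁴ ≺ xy³ ≺ x⁴ ≺ x³y`; `xy⁴ ≺ x⁴y`
or with its image under exchanging `x` and `y` — i.e. up to the irrelevant ordering
between elements of different ranks these are exactly the two Macaulay orders. -/
theorem heart_monPoset_macaulay_orders
    (r : MonPoset heartIdeal → ℕ)
    (hr : ∀ (c : MonPoset heartIdeal) (a : Fin 2 →₀ ℕ),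
      c.1 = Ideal.Quotient.mk heartIdeal (monomial a (1 : ℚ)) → r c = a 0 + a 1) :
    (IsRankFunctionR (monDvd heartIdeal) r ∧
      (∀ d : ℕ, {c : MonPoset heartIdeal | r c = d}.Finite) ∧
      ∃ t, IsLinearOrder (MonPoset heartIdeal) t ∧
        MacaulayWith (monDvd heartIdeal) r t) ∧
    (∀ t, IsLinearOrder (MonPoset heartIdeal) t →
      (MacaulayWith (monDvd heartIdeal) r t ↔
        ((∀ c c' : MonPoset heartIdeal, r c = r c' →
            (t c c' ↔ tableOrder twistTable c c')) ∨
         (∀ c c' : MonPoset heartIdeal, r c = r c' →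
            (t c c' ↔ tableOrder (fun i j => twistTable j i) c c'))))) := by
  have hdeg (u : HeartExp) : r (heartEquiv u) = deg u := by
    rw [hr _ _ (heartEquiv_val u), toFinsupp_zero, toFinsupp_one, deg]
  have hle (u v : HeartExp) : monDvd heartIdeal (heartEquiv u) (heartEquiv v) ↔ u ≤ v :=
    monDvd_heartEquiv_iff
  refine ⟨⟨IsRankFunctionR.of_equiv heartEquiv hle hdeg isRankFunctionR_deg,
    fun _ => Set.toFinite _, tableOrder twistTable, isLinearOrder_tableOrder_twistTable, ?_⟩,
    fun t ht => ?_⟩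
  · have ht (u v : HeartExp) := tableOrder_heartEquiv_iff twistTable (u := u) (v := v)
    refine (macaulayWith_equiv_iff heartEquiv hle ht hdeg).2 <|
      (macaulayWith_iff_exists_agreesOnLevels
        (isLinearOrder_tableOrder_twistTable.of_equiv heartEquiv ht)).2 ?_
    exact ⟨_, List.mem_cons_self, fun _ _ _ => Iff.rfl⟩
  · refine (macaulayWith_equiv_iff heartEquiv hle (fun _ _ => Iff.rfl) hdeg).trans <|
      (macaulayWith_iff_exists_agreesOnLevels (ht.of_equiv heartEquiv fun _ _ => Iff.rfl)).trans ?_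
    rw [forall_tableOrder_iff_agreesOnLevels hdeg, forall_tableOrder_iff_agreesOnLevels hdeg]
    simp [twistKeys]
end
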